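/- arXiv:2601.18440 — 9 statements merged into one kernel-verified Lean document; each statement's English description precedes it below -/
import Mathlib

section
/- Let [0:N-1] be partitioned into M disjoint sets P_1,...,P_M with |P_i| = N_i, and let T_i ≤ N_i for each i. Define F to be the union of (Type 1) sets S with |S ∩ P_i| ≥ T_i + 1 for some i, and (Type 2) sets S with |S ∩ P_j| ≥ T_j and |S ∩ P_k| ≥ T_k for some j ≠ k. Then the hitting number of F equals Σ_{i=1}^M (N_i - T_i) + (M - 1). -/
/-!
A family closed under supersets is hit by `H` exactly when it does not contain the complement
of `H`. For the collusion family this says: at most `T i` points of each group `P i` avoid `H`,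
and at most one group has as many as `T i` points outside `H`. So `H` must contain at least
`|P i| - T i` points of every group and at least one more in all groups but one, which gives the
lower bound; taking exactly that many points from each group attains it.
-/

open Finset Function

theorem forall_inter_nonempty_iff_not_compl {α : Type*} [Fintype α] [DecidableEq α]
    {F : Finset α → Prop} (hF : ∀ ⦃S S'⦄, S ⊆ S' → F S → F S') (H : Finset α) :
    (∀ S, F S → (S ∩ H).Nonempty) ↔ ¬ F Hᶜ := by
  refine ⟨fun hH hc => ?_, fun hH S hS => ?_⟩
  · obtain ⟨x, hx⟩ := hH _ hc
    simp at hx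
  by_contra hempty
  refine hH (hF (fun x hx => ?_) hS)
  exact mem_compl.2 fun hxH => hempty ⟨x, mem_inter.2 ⟨hx, hxH⟩⟩

theorem Finset.sum_add_card_sub_one_le_sum {ι : Type*} [Fintype ι]
    {f g : ι → ℕ} (hle : ∀ i, g i ≤ f i) (hsub : {i | f i ≤ g i}.Subsingleton) :
    ∑ i, g i + (Fintype.card ι - 1) ≤ ∑ i, f i := by
  classical
  by_cases h : ∃ i₀, f i₀ ≤ g i₀
  · obtain ⟨i₀, hi₀⟩ := h
    have hlt : ∀ i ∈ univ.erase i₀, g i + 1 ≤ f i := fun i hi =>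
      Order.add_one_le_of_lt <| lt_of_not_ge fun hi' => ne_of_mem_erase hi (hsub hi' hi₀)
    have := sum_le_sum hlt
    rw [sum_add_distrib, sum_const, card_erase_of_mem (mem_univ _), card_univ,
      smul_eq_mul, mul_one] at this
    rw [← add_sum_erase _ f (mem_univ i₀), ← add_sum_erase _ g (mem_univ i₀)]
    have := hle i₀
    omega
  · push Not at h
    have := sum_le_sum fun i (_ : i ∈ univ) => Order.add_one_le_of_lt (h i)
    rw [sum_add_distrib, sum_const, card_univ, smul_eq_mul, mul_one] at this
    omega

namespace DisjointCollusion

variable {α ι : Type*} [DecidableEq α] (P : ι → Finset α) (T : ι → ℕ)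

/-- The family `F`: Type 1 sets, then Type 2 sets. -/
def IsCollusion (S : Finset α) : Prop :=
  (∃ i, T i + 1 ≤ #(S ∩ P i)) ∨
    ∃ j k, j ≠ k ∧ T j ≤ #(S ∩ P j) ∧ T k ≤ #(S ∩ P k)

variable {P T}

theorem IsCollusion.mono ⦃S S' : Finset α⦄ (hS : S ⊆ S') :
    IsCollusion P T S → IsCollusion P T S' := by
  have h i : #(S ∩ P i) ≤ #(S' ∩ P i) := card_le_card (inter_subset_inter_right hS)
  rintro (⟨i, hi⟩ | ⟨j, k, hjk, hj, hk⟩)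
  · exact Or.inl ⟨i, hi.trans (h i)⟩
  · exact Or.inr ⟨j, k, hjk, hj.trans (h j), hk.trans (h k)⟩

theorem not_isCollusion_compl_iff [Fintype α] {H : Finset α} :
    ¬ IsCollusion P T Hᶜ ↔
      (∀ i, #(P i \ H) ≤ T i) ∧ {i | T i ≤ #(P i \ H)}.Subsingleton := by
  simp only [IsCollusion, inter_comm _ (P _), ← sdiff_eq_inter_compl, Set.Subsingleton,
    Set.mem_ofPred_eq]
  push Not
  refine and_congr (forall_congr' fun i => Nat.lt_succ_iff) ⟨fun h j hj k hk => ?_, ?_⟩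
  · by_contra hjk
    exact (h j k hjk hj).not_ge hk
  · exact fun h j k hjk hj => lt_of_not_ge fun hk => hjk (h hj hk)

theorem sum_card_sub_add_card_sub_one_le_card [Fintype α] [Fintype ι]
    (hdisj : Pairwise (Disjoint on P)) (hTP : ∀ i, T i ≤ #(P i)) {H : Finset α}
    (hH : ¬ IsCollusion P T Hᶜ) :
    ∑ i, (#(P i) - T i) + (Fintype.card ι - 1) ≤ #H := by
  obtain ⟨hle, hsub⟩ := not_isCollusion_compl_iff.1 hH
  have hsplit i : #(P i \ H) + #(P i ∩ H) = #(P i) := card_sdiff_add_card_inter _ _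
  calc ∑ i, (#(P i) - T i) + (Fintype.card ι - 1) ≤ ∑ i, #(P i ∩ H) := by
        refine sum_add_card_sub_one_le_sum (fun i => ?_) fun j hj k hk => hsub ?_ ?_
        · have := hsplit i; have := hle i; omega
        · have := hsplit j; have := hTP j
          simp only [Set.mem_ofPred_eq] at hj ⊢; omega
        · have := hsplit k; have := hTP k
          simp only [Set.mem_ofPred_eq] at hk ⊢; omega
    _ = #(univ.biUnion fun i => P i ∩ H) := (card_biUnion fun i _ j _ hij =>
        (hdisj hij).mono inter_subset_left inter_subset_left).symm
    _ ≤ #H := card_le_card (biUnion_subset.2 fun _ _ => inter_subset_right)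

/-- Each group `P i` with `i ≠ i₀` is left with `T i - 1` points outside `H`, and `P i₀`
with `T i₀`. -/
theorem exists_card_eq_sum_card_sub_add_card_sub_one [Fintype α] [Fintype ι]
    (hdisj : Pairwise (Disjoint on P)) (i₀ : ι) (hT : ∀ i, i ≠ i₀ → 1 ≤ T i)
    (hTP : ∀ i, T i ≤ #(P i)) :
    ∃ H : Finset α, #H = ∑ i, (#(P i) - T i) + (Fintype.card ι - 1) ∧
      ¬ IsCollusion P T Hᶜ := by
  classical
  have hchoice i : ∃ t ⊆ P i, #t = #(P i) - T i + if i = i₀ then 0 else 1 :=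
    exists_subset_card_eq <| by
      split_ifs with h
      · omega
      · have := hT i h; have := hTP i; omega
  choose Hs hHsP hHs using hchoice
  have hdisjHs : ((univ : Finset ι) : Set ι).PairwiseDisjoint Hs :=
    fun i _ j _ hij => (hdisj hij).mono (hHsP i) (hHsP j)
  set H := univ.biUnion Hs
  have hPH i : P i ∩ H = Hs i := by
    refine Subset.antisymm (fun x hx => ?_)
      (subset_inter (hHsP i) (subset_biUnion_of_mem _ (mem_univ i)))
    obtain ⟨hxP, hxH⟩ := mem_inter.1 hx
    obtain ⟨j, -, hxj⟩ := mem_biUnion.1 hxH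
    obtain rfl : i = j := by_contra fun hij => disjoint_left.1 (hdisj hij) hxP (hHsP j hxj)
    exact hxj
  have huncovered i : #(P i \ H) = T i - if i = i₀ then 0 else 1 := by
    have := card_sdiff_add_card_inter (P i) H
    rw [hPH, hHs] at this
    have := hTP i
    split_ifs at * <;> omega
  have honly i (hi : T i ≤ #(P i \ H)) : i = i₀ := by
    by_contra h
    rw [huncovered, if_neg h] at hi
    have := hT i h
    omega
  refine ⟨H, ?_, not_isCollusion_compl_iff.2 ⟨fun i => ?_, fun j hj k hk => ?_⟩⟩
  · rw [card_biUnion hdisjHs, sum_congr rfl fun i _ => hHs i, sum_add_distrib]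
    simp [sum_ite, filter_ne', card_erase_of_mem]
  · exact huncovered i ▸ Nat.sub_le _ _
  · exact (honly j hj).trans (honly k hk).symm

end DisjointCollusion

theorem hitting_number_disjoint_collusion_general (N M : ℕ) (hM : 2 ≤ M)
    (P : Fin M → Finset (Fin N)) (Nc T : Fin M → ℕ)
    (hdisj : ∀ i j : Fin M, i ≠ j → Disjoint (P i) (P j))
    (hcard : ∀ i, (P i).card = Nc i)
    (hT1 : ∀ i, 1 ≤ T i) (hTN : ∀ i, T i ≤ Nc i) :
    IsLeast {k : ℕ | ∃ H : Finset (Fin N), H.card = k ∧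
      ∀ S : Finset (Fin N),
        ((∃ i, T i + 1 ≤ (S ∩ P i).card) ∨
         (∃ j k, j ≠ k ∧ T j ≤ (S ∩ P j).card ∧ T k ≤ (S ∩ P k).card)) →
        (S ∩ H).Nonempty}
      (∑ i, (Nc i - T i) + (M - 1)) := by
  obtain rfl : Nc = fun i => (P i).card := funext fun i => (hcard i).symm
  have hdisj' : Pairwise (Disjoint on P) := fun i j hij => hdisj i j hij
  have hhit H := forall_inter_nonempty_iff_not_compl
    (DisjointCollusion.IsCollusion.mono (P := P) (T := T)) H
  constructor
  · obtain ⟨H, hH, hcoll⟩ := DisjointCollusion.exists_card_eq_sum_card_sub_add_card_sub_one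
      hdisj' ⟨0, by omega⟩ (fun i _ => hT1 i) hTN
    rw [Fintype.card_fin] at hH
    exact ⟨H, hH, (hhit H).2 hcoll⟩
  · rintro k ⟨H, rfl, hH⟩
    simpa using DisjointCollusion.sum_card_sub_add_card_sub_one_le_card hdisj' hTN ((hhit H).1 hH)

/-- For a partition of `[0:N-1]` into `M` disjoint groups `P i` of sizes `Nc i`, with
thresholds `T i ≤ Nc i`, the hitting number of the family consisting of
Type 1 sets (`|S ∩ P i| ≥ T i + 1` for some `i`) and Type 2 sets
(`|S ∩ P j| ≥ T j` and `|S ∩ P k| ≥ T k` for some `j ≠ k`) equals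
`Σ_i (Nc i - T i) + (M - 1)`. -/
theorem hitting_number_disjoint_collusion (N M : ℕ) (hM : 2 ≤ M)
    (P : Fin M → Finset (Fin N)) (Nc T : Fin M → ℕ)
    (hdisj : ∀ i j : Fin M, i ≠ j → Disjoint (P i) (P j))
    (hcover : Finset.univ.biUnion P = (Finset.univ : Finset (Fin N)))
    (hcard : ∀ i, (P i).card = Nc i)
    (hT1 : ∀ i, 1 ≤ T i) (hTN : ∀ i, T i ≤ Nc i) :
    IsLeast {k : ℕ | ∃ H : Finset (Fin N), H.card = k ∧
      ∀ S : Finset (Fin N),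
        ((∃ i, T i + 1 ≤ (S ∩ P i).card) ∨
         (∃ j k, j ≠ k ∧ T j ≤ (S ∩ P j).card ∧ T k ≤ (S ∩ P k).card)) →
        (S ∩ H).Nonempty}
      (∑ i, (Nc i - T i) + (M - 1)) :=
  hitting_number_disjoint_collusion_general N M hM P Nc T hdisj hcard hT1 hTN
end

section
/- For the cyclically T-contiguous collusion pattern on N servers with N ≥ 2T, the family F(P) defined as the sets S ⊆ [0:N-1] containing some colluding set T_m such that for every i ∈ T_m there exists a colluding set contained in S \ {i}, coincides with the family of sets S containing two disjoint colluding sets, i.e., F(P) = {S : ∃ T_1, T_2 ∈ P, T_1 ∪ T_2 ⊆ S, T_1 ∩ T_2 = ∅}. -/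
/-!
If `I_j ⊆ S` and every point of `I_j` can be avoided by an interval inside `S`, take the largest
`M < T` with `I_{j+M} ⊆ S` and an interval `I_r ⊆ S` avoiding `j + M`. Maximality forbids `r` to
start in `[j, j + M]`, so either `I_r` is disjoint from `I_j`, or `I_r` starts before `j` and ends
before `j + M`. In the latter case the interval `I_{r+T}` right after it starts in `[j, j + M]`,
hence lies in `I_j ∪ I_{j+M} ⊆ S`, and it is disjoint from `I_r` because `2T ≤ N`.
-/

def cycInt (N T : ℕ) (j : ZMod N) : Finset (ZMod N) :=
  (Finset.range T).image (fun t : ℕ => j + (t : ZMod N))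

namespace cycInt

variable {N T : ℕ}

theorem add_natCast_mem {t : ℕ} (ht : t < T) (j : ZMod N) : j + (t : ZMod N) ∈ cycInt N T j :=
  Finset.mem_image_of_mem _ (Finset.mem_range.mpr ht)

theorem mem_iff [NeZero N] {j x : ZMod N} : x ∈ cycInt N T j ↔ (x - j).val < T := by
  refine ⟨?_, fun h => by simpa using add_natCast_mem h j⟩
  simp only [cycInt, Finset.mem_image, Finset.mem_range]
  rintro ⟨t, ht, rfl⟩
  rw [add_sub_cancel_left, ZMod.val_natCast]
  exact (Nat.mod_le t N).trans_lt ht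

theorem disjoint_of_le_val [NeZero N] {j k : ZMod N} (h₁ : T ≤ (k - j).val)
    (h₂ : (k - j).val + T ≤ N) : Disjoint (cycInt N T j) (cycInt N T k) := by
  refine Finset.disjoint_left.mpr fun x hxj hxk => ?_
  rw [mem_iff] at hxj hxk
  have hval : (x - j).val = ((x - k).val + (k - j).val) % N := by
    rw [← ZMod.val_add, sub_add_sub_cancel]
  rw [Nat.mod_eq_of_lt (by omega)] at hval
  omega

theorem add_natCast_subset_union {e M : ℕ} (he : e ≤ M) (hM : M ≤ T) (j : ZMod N) :
    cycInt N T (j + e) ⊆ cycInt N T j ∪ cycInt N T (j + M) := by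
  intro x hx
  obtain ⟨t, ht, rfl⟩ := Finset.mem_image.mp hx
  rw [Finset.mem_range] at ht
  rcases lt_or_ge (e + t) T with h | h
  · have hx : j + e + (t : ZMod N) = j + ((e + t : ℕ) : ZMod N) := by
      push_cast
      ring
    exact Finset.mem_union_left _ (hx ▸ add_natCast_mem h j)
  · have hx : j + e + (t : ZMod N) = j + M + ((e + t - M : ℕ) : ZMod N) := by
      push_cast [Nat.cast_sub (show M ≤ e + t by omega)]
      ring
    exact Finset.mem_union_right _ (hx ▸ add_natCast_mem (by omega) _)

end cycInt

theorem exists_disjoint_cycInt_of_forall_subset_erase {N T : ℕ} [NeZero N] (hT : 1 ≤ T)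
    (hN : 2 * T ≤ N) {S : Finset (ZMod N)} {j : ZMod N} (hjS : cycInt N T j ⊆ S)
    (h : ∀ i ∈ cycInt N T j, ∃ r : ZMod N, cycInt N T r ⊆ S.erase i) :
    ∃ j k : ZMod N, cycInt N T j ∪ cycInt N T k ⊆ S ∧
      Disjoint (cycInt N T j) (cycInt N T k) := by
  classical
  set P : ℕ → Prop := fun m => cycInt N T (j + m) ⊆ S with hP
  set M := Nat.findGreatest P (T - 1)
  have hMT : M < T := (Nat.findGreatest_le _).trans_lt (by omega)
  have hMS : cycInt N T (j + M) ⊆ S :=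
    Nat.findGreatest_spec (P := P) (Nat.zero_le _) (by simpa [hP] using hjS)
  obtain ⟨r, hr⟩ := h _ (cycInt.add_natCast_mem hMT j)
  obtain ⟨hrS, hMr⟩ := Finset.subset_erase.mp hr
  obtain ⟨d, hdN, rfl⟩ : ∃ d < N, r = j + d := ⟨(r - j).val, ZMod.val_lt _, by simp⟩
  have hval : (j + d - j).val = d := by simpa using ZMod.val_natCast_of_lt hdN
  rcases lt_or_ge d T with hdT | hTd
  · have hdM : d ≤ M := Nat.le_findGreatest (by omega) hrS
    have hMd : j + (M : ZMod N) = j + d + ((M - d : ℕ) : ZMod N) := by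
      push_cast [Nat.cast_sub hdM]
      ring
    exact absurd (hMd ▸ cycInt.add_natCast_mem (by omega) _) hMr
  rcases le_or_gt (d + T) N with hdTN | hNdT
  · exact ⟨j, j + d, Finset.union_subset hjS hrS,
      cycInt.disjoint_of_le_val (by rwa [hval]) (by rwa [hval])⟩
  have he : d + T - N ≤ M := by
    by_contra! hlt
    have hMd : j + (M : ZMod N) = j + d + ((M + (N - d) : ℕ) : ZMod N) := by
      push_cast [Nat.cast_sub hdN.le, ZMod.natCast_self]
      ring
    exact hMr (hMd ▸ cycInt.add_natCast_mem (by omega) _)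
  have hnext : j + d + T = j + ((d + T - N : ℕ) : ZMod N) := by
    push_cast [Nat.cast_sub hNdT.le, ZMod.natCast_self]
    ring
  have hTval : (j + d + T - (j + d)).val = T := by
    simpa using ZMod.val_natCast_of_lt (by omega : T < N)
  refine ⟨j + d, j + d + T, Finset.union_subset hrS ?_,
    cycInt.disjoint_of_le_val (by rw [hTval]) (by omega)⟩
  rw [hnext]
  exact (cycInt.add_natCast_subset_union he hMT.le j).trans (Finset.union_subset hjS hMS)

/-- For the cyclically `T`-contiguous collusion pattern on `N ≥ 2T` servers, the family
`F(P)` (sets `S` containing a colluding set `T_m` such that for every `i ∈ T_m` some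
colluding set is contained in `S \ {i}`) coincides with the family of sets containing two
disjoint colluding sets. -/
theorem family_eq_two_disjoint_intervals (N T : ℕ) (hT : 1 ≤ T) (hN : 2 * T ≤ N) :
    {S : Finset (ZMod N) | ∃ j : ZMod N, cycInt N T j ⊆ S ∧
        ∀ i ∈ cycInt N T j, ∃ r : ZMod N, cycInt N T r ⊆ S.erase i} =
    {S : Finset (ZMod N) | ∃ j k : ZMod N,
        cycInt N T j ∪ cycInt N T k ⊆ S ∧
        Disjoint (cycInt N T j) (cycInt N T k)} := by
  have : NeZero N := ⟨by omega⟩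
  ext S
  constructor
  · rintro ⟨j, hjS, h⟩
    exact exists_disjoint_cycInt_of_forall_subset_erase hT hN hjS h
  · rintro ⟨j, k, hsub, hdisj⟩
    obtain ⟨hjS, hkS⟩ := Finset.union_subset_iff.mp hsub
    exact ⟨j, hjS, fun i hi =>
      ⟨k, Finset.subset_erase.mpr ⟨hkS, Finset.disjoint_left.mp hdisj hi⟩⟩⟩
end

section
/- For the cyclically T-contiguous collusion pattern on N servers (T ≥ 1, N > T), the hitting number of the family F = {S ⊆ Z_N : S contains two disjoint cyclic intervals of length T} equals ⌈N/T⌉ - 1. -/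
open Finset

theorem Finset.exists_ne_disjoint_disjoint_of_card_add_two_le {ι α : Type*} [DecidableEq α]
    {s : Finset ι} {A : ι → Finset α} (hA : (s : Set ι).PairwiseDisjoint A) {X : Finset α}
    (h : #X + 2 ≤ #s) :
    ∃ i ∈ s, ∃ i' ∈ s, i ≠ i' ∧ Disjoint (A i) X ∧ Disjoint (A i') X := by
  classical
  have hbad : #{i ∈ s | ¬Disjoint (A i) X} ≤ #X := by
    refine card_le_card_of_forall_subsingleton (fun i x => x ∈ A i) (fun i hi => ?_) ?_
    · obtain ⟨x, hx⟩ := not_disjoint_iff_nonempty_inter.mp (mem_filter.mp hi).2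
      exact ⟨x, (mem_inter.mp hx).2, (mem_inter.mp hx).1⟩
    · intro x _ i hi i' hi'
      exact hA.elim (mem_filter.mp hi.1).1 (mem_filter.mp hi'.1).1
        (not_disjoint_iff.mpr ⟨x, hi.2, hi'.2⟩)
  have := card_filter_add_card_filter_not (s := s) fun i => Disjoint (A i) X
  obtain ⟨i, hi, i', hi', hne⟩ :=
    one_lt_card.mp (show 1 < #{i ∈ s | Disjoint (A i) X} by omega)
  rw [mem_filter] at hi hi'
  exact ⟨i, hi.1, i', hi'.1, hne, hi.2, hi'.2⟩

section CyclicIntervals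

variable {N T : ℕ}

theorem mem_cycInt_add_natCast_iff [NeZero N] {a : ℕ} (h : a + T ≤ N) (j z : ZMod N) :
    z ∈ cycInt N T (j + a) ↔ a ≤ (z - j).val ∧ (z - j).val < a + T := by
  simp only [cycInt, mem_image, mem_range]
  constructor
  · rintro ⟨t, ht, rfl⟩
    have : j + a + t - j = ((a + t : ℕ) : ZMod N) := by push_cast; ring
    rw [this, ZMod.val_natCast, Nat.mod_eq_of_lt (by omega)]
    omega
  · rintro ⟨h₁, h₂⟩
    refine ⟨(z - j).val - a, by omega, ?_⟩
    rw [Nat.cast_sub h₁, ZMod.natCast_zmod_val]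
    ring

theorem mem_cycInt_iff_of_val_add_le [NeZero N] {j : ZMod N} (h : j.val + T ≤ N) (z : ZMod N) :
    z ∈ cycInt N T j ↔ j.val ≤ z.val ∧ z.val < j.val + T := by
  simpa using mem_cycInt_add_natCast_iff h 0 z

theorem val_add_le_of_zero_notMem_cycInt [NeZero N] {j : ZMod N}
    (h : (0 : ZMod N) ∉ cycInt N T j) : j.val + T ≤ N := by
  by_contra! hlt
  have := ZMod.val_lt j
  refine h (mem_image.mpr ⟨N - j.val, mem_range.mpr (by omega), ?_⟩)
  rw [Nat.cast_sub (ZMod.val_lt j).le, ZMod.natCast_self, ZMod.natCast_zmod_val]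
  ring

theorem disjoint_cycInt_zero_natCast [NeZero N] (h : 2 * T ≤ N) :
    Disjoint (cycInt N T 0) (cycInt N T T) := by
  have hT : ((T : ℕ) : ZMod N).val = T := by
    rw [ZMod.val_natCast, Nat.mod_eq_of_lt (by have := NeZero.pos N; omega)]
  refine disjoint_left.mpr fun z hz hz' => ?_
  rw [mem_cycInt_iff_of_val_add_le (by rw [ZMod.val_zero]; omega), ZMod.val_zero] at hz
  rw [mem_cycInt_iff_of_val_add_le (by rw [hT]; omega), hT] at hz'
  omega

def multiplesBelow (N T M : ℕ) : Finset (ZMod N) :=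
  (range M).image fun i => ((i * T : ℕ) : ZMod N)

theorem card_multiplesBelow {M : ℕ} (hT : 0 < T) (h : M * T ≤ N) :
    #(multiplesBelow N T M) = M := by
  rw [multiplesBelow, card_image_of_injOn, card_range]
  have hlt : ∀ i < M, i * T < N := fun i hi => (Nat.mul_lt_mul_of_pos_right hi hT).trans_le h
  intro i hi i' hi' heq
  rw [coe_range, Set.mem_Iio] at hi hi'
  rw [ZMod.natCast_eq_natCast_iff', Nat.mod_eq_of_lt (hlt i hi),
    Nat.mod_eq_of_lt (hlt i' hi')] at heq
  exact Nat.eq_of_mul_eq_mul_right hT heq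

theorem mul_lt_val_add_and_val_add_le_of_disjoint_multiplesBelow [NeZero N] {M : ℕ}
    (hT : 0 < T) (hM : 1 ≤ M) {j : ZMod N}
    (hd : Disjoint (cycInt N T j) (multiplesBelow N T M)) :
    M * T < j.val + T ∧ j.val + T ≤ N := by
  have hwrap : j.val + T ≤ N := val_add_le_of_zero_notMem_cycInt fun h₀ =>
    disjoint_left.mp hd h₀ (mem_image.mpr ⟨0, mem_range.mpr hM, by simp⟩)
  refine ⟨?_, hwrap⟩
  by_contra! hle
  set i := (j.val + T - 1) / T
  have hi₁ : i * T ≤ j.val + T - 1 := Nat.div_mul_le_self _ _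
  have hi₂ : j.val + T - 1 < i * T + T := Nat.lt_div_mul_add hT
  have hiM : i < M := Nat.lt_of_mul_lt_mul_right (a := T) (by omega)
  refine disjoint_left.mp hd ((mem_cycInt_iff_of_val_add_le hwrap _).mpr ?_)
    (mem_image_of_mem _ (mem_range.mpr hiM))
  rw [ZMod.val_natCast, Nat.mod_eq_of_lt (by omega)]
  omega

theorem not_disjoint_union_multiplesBelow [NeZero N] {M : ℕ} (hT : 0 < T) (hM : 1 ≤ M)
    (hN : N ≤ (M + 1) * T) {j j' : ZMod N} (hd : Disjoint (cycInt N T j) (cycInt N T j')) :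
    ¬Disjoint (cycInt N T j ∪ cycInt N T j') (multiplesBelow N T M) := by
  wlog hle : j.val ≤ j'.val generalizing j j'
  · rw [union_comm]
    exact this hd.symm (by omega)
  rw [disjoint_union_left]
  rintro ⟨h, h'⟩
  obtain ⟨hj, hwrap⟩ := mul_lt_val_add_and_val_add_le_of_disjoint_multiplesBelow hT hM h
  obtain ⟨-, hwrap'⟩ := mul_lt_val_add_and_val_add_le_of_disjoint_multiplesBelow hT hM h'
  rw [add_one_mul] at hN
  exact disjoint_left.mp hd ((mem_cycInt_iff_of_val_add_le hwrap j').mpr ⟨hle, by omega⟩)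
    ((mem_cycInt_iff_of_val_add_le hwrap' j').mpr ⟨le_rfl, by omega⟩)

theorem exists_disjoint_cycInt_disjoint_of_card_erase_add_two_le [NeZero N] {M : ℕ}
    (hMN : M * T < N) {H : Finset (ZMod N)} {h : ZMod N} (hh : #(H.erase h) + 2 ≤ M) :
    ∃ j j' : ZMod N, Disjoint (cycInt N T j) (cycInt N T j') ∧
      Disjoint (cycInt N T j ∪ cycInt N T j') H := by
  set A : ℕ → Finset (ZMod N) := fun i => cycInt N T (h + ((1 + i * T : ℕ) : ZMod N))
  have hA : ∀ i < M, ∀ z,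
      z ∈ A i ↔ 1 + i * T ≤ (z - h).val ∧ (z - h).val < 1 + i * T + T := by
    intro i hi
    refine mem_cycInt_add_natCast_iff ?_ h
    have : (i + 1) * T ≤ M * T := Nat.mul_le_mul_right T hi
    rw [add_one_mul] at this
    omega
  have hindex : ∀ i < M, ∀ z ∈ A i, ((z - h).val - 1) / T = i := fun i hi z hz => by
    rw [hA i hi] at hz
    exact Nat.div_eq_of_lt_le (by omega) (by rw [add_one_mul]; omega)
  have hAdisj : ((range M : Finset ℕ) : Set ℕ).PairwiseDisjoint A := by
    intro i hi i' hi' hne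
    rw [coe_range, Set.mem_Iio] at hi hi'
    exact disjoint_left.mpr fun z hz hz' =>
      hne ((hindex i hi z hz).symm.trans (hindex i' hi' z hz'))
  have hhA : ∀ i < M, h ∉ A i := fun i hi hmem => by
    rw [hA i hi, sub_self, ZMod.val_zero] at hmem
    omega
  obtain ⟨i, hi, i', hi', hne, hdi, hdi'⟩ :=
    exists_ne_disjoint_disjoint_of_card_add_two_le hAdisj (by rwa [card_range])
  rw [mem_range] at hi hi'
  rw [← disjoint_erase_comm, erase_eq_of_notMem (hhA i hi)] at hdi
  rw [← disjoint_erase_comm, erase_eq_of_notMem (hhA i' hi')] at hdi'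
  exact ⟨_, _, hAdisj (by simpa) (by simpa) hne, disjoint_union_left.mpr ⟨hdi, hdi'⟩⟩

theorem exists_disjoint_cycInt_disjoint_of_card_lt [NeZero N] {M : ℕ} (h2T : 2 * T ≤ N)
    (hMN : M * T < N) {H : Finset (ZMod N)} (hH : #H < M) :
    ∃ j j' : ZMod N, Disjoint (cycInt N T j) (cycInt N T j') ∧
      Disjoint (cycInt N T j ∪ cycInt N T j') H := by
  rcases H.eq_empty_or_nonempty with rfl | ⟨h, hh⟩
  · exact ⟨0, T, disjoint_cycInt_zero_natCast h2T, disjoint_empty_right _⟩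
  · refine exists_disjoint_cycInt_disjoint_of_card_erase_add_two_le hMN (h := h) ?_
    have := card_pos.mpr ⟨h, hh⟩
    rw [card_erase_of_mem hh]
    omega

theorem natCeil_div_sub_one_mul_lt (hN : 0 < N) (hT : 0 < T) :
    (⌈(N : ℚ) / T⌉₊ - 1) * T < N := by
  have hpos : 0 < ⌈(N : ℚ) / T⌉₊ := Nat.ceil_pos.mpr (by positivity)
  have := Nat.lt_ceil.mp (Nat.sub_one_lt hpos.ne')
  rw [lt_div_iff₀ (by exact_mod_cast hT)] at this
  exact_mod_cast this

theorem le_natCeil_div_mul (hT : 0 < T) : N ≤ ⌈(N : ℚ) / T⌉₊ * T := by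
  have := Nat.le_ceil ((N : ℚ) / T)
  rw [div_le_iff₀ (by exact_mod_cast hT)] at this
  exact_mod_cast this

end CyclicIntervals

/-- For the cyclically `T`-contiguous collusion pattern on `N` servers with `N ≥ 2T`,
the hitting number of the family of sets containing two disjoint cyclic intervals of
length `T` equals `⌈N/T⌉ - 1`. -/
theorem hitting_number_cyclic_contiguous (N T : ℕ) (hT : 1 ≤ T) (hN : 2 * T ≤ N) :
    IsLeast {k : ℕ | ∃ H : Finset (ZMod N), H.card = k ∧
      ∀ S : Finset (ZMod N),
        (∃ j j' : ZMod N, Disjoint (cycInt N T j) (cycInt N T j') ∧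
          cycInt N T j ∪ cycInt N T j' ⊆ S) → (S ∩ H).Nonempty}
      (⌈(N : ℚ) / (T : ℚ)⌉₊ - 1) := by
  have hNpos : 0 < N := by omega
  have : NeZero N := ⟨hNpos.ne'⟩
  have hMN := natCeil_div_sub_one_mul_lt hNpos hT
  have hceil := le_natCeil_div_mul (N := N) hT
  set M := ⌈(N : ℚ) / T⌉₊ - 1
  have hNM : N ≤ (M + 1) * T := by rwa [Nat.sub_add_cancel (Nat.ceil_pos.mpr (by positivity))]
  have hM : 2 ≤ M + 1 := Nat.le_of_mul_le_mul_right (hN.trans hNM) hT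
  refine ⟨⟨_, card_multiplesBelow hT hMN.le, ?_⟩, ?_⟩
  · rintro S ⟨j, j', hd, hsub⟩
    have hhit := not_disjoint_union_multiplesBelow hT (by omega) hNM hd
    exact (not_disjoint_iff_nonempty_inter.mp hhit).mono (inter_subset_inter_right hsub)
  · rintro k ⟨H, rfl, hH⟩
    by_contra! hlt
    obtain ⟨j, j', hd, hdH⟩ := exists_disjoint_cycInt_disjoint_of_card_lt hN hMN hlt
    rw [disjoint_iff_inter_eq_empty] at hdH
    simpa [hdH] using hH _ ⟨j, j', hd, subset_rfl⟩
end

section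
/- Let Z_N be partitioned into M groups P_1,...,P_M of sizes N_1,...,N_M, where within group P_i the colluding sets are the cyclic intervals of length T_i (with respect to a cyclic ordering of P_i). Let F be the family of subsets S containing two disjoint colluding sets (from the same or different groups). Then the hitting number of F equals Σ_{i=1}^M ⌈N_i/T_i⌉ - 1. -/
open Finset

theorem Nat.ceil_natCast_div_natCast {K : Type*} [Field K] [LinearOrder K]
    [IsStrictOrderedRing K] [FloorSemiring K] (a b : ℕ) : ⌈(a : K) / b⌉₊ = a ⌈/⌉ b := by
  rcases b.eq_zero_or_pos with rfl | hb
  · simp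
  refine eq_of_forall_ge_iff fun c => ?_
  rw [Nat.ceil_le, div_le_iff₀ (by exact_mod_cast hb), ceilDiv_le_iff_le_mul hb, mul_comm]
  exact_mod_cast Iff.rfl

theorem Nat.lt_ceilDiv_iff_mul_lt {a b c : ℕ} (hb : 0 < b) : c < a ⌈/⌉ b ↔ b * c < a := by
  rw [← not_le, ceilDiv_le_iff_le_mul hb, not_le]

theorem ZMod.exists_and_not_sub_one {N : ℕ} [NeZero N] {p : ZMod N → Prop} (ha : ∃ a, p a)
    (hb : ∃ b, ¬p b) : ∃ j, p j ∧ ¬p (j - 1) := by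
  obtain ⟨a, ha⟩ := ha
  obtain ⟨b, hb⟩ := hb
  by_contra! h
  have hdown : ∀ n : ℕ, p (a - n) := by
    intro n
    induction n with
    | zero => simpa using ha
    | succ n ih => simpa [sub_sub] using h _ ih
  exact hb (by simpa using hdown (a - b).val)

section CyclicInterval

variable {N T L : ℕ}

theorem card_cycInt (h : T ≤ N) (j : ZMod N) : #(cycInt N T j) = T := by
  rw [cycInt, card_image_of_injOn, card_range]
  intro s hs t ht hst
  simp only [coe_range, Set.mem_Iio] at hs ht
  have hst : (s : ZMod N) = t := add_left_cancel hst
  rwa [ZMod.natCast_eq_natCast_iff', Nat.mod_eq_of_lt (by omega),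
    Nat.mod_eq_of_lt (by omega)] at hst

theorem self_mem_cycInt (hT : 0 < T) (j : ZMod N) : j ∈ cycInt N T j :=
  mem_image.2 ⟨0, mem_range.2 hT, by simp⟩

theorem cycInt_mono (h : T ≤ L) (j : ZMod N) : cycInt N T j ⊆ cycInt N L j :=
  image_subset_image (range_subset_range.2 h)

theorem cycInt_add_subset {r : ℕ} (h : r + T ≤ L) (j : ZMod N) :
    cycInt N T (j + r) ⊆ cycInt N L j := by
  intro x hx
  obtain ⟨t, ht, rfl⟩ := mem_image.1 hx
  exact mem_image.2 ⟨r + t, mem_range.2 (by have := mem_range.1 ht; omega), by push_cast; ring⟩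

theorem cycInt_succ (T : ℕ) (j : ZMod N) :
    cycInt N (T + 1) j = insert j (cycInt N T (j + 1)) := by
  ext x
  simp only [cycInt, mem_insert, mem_image, mem_range]
  constructor
  · rintro ⟨_ | t, ht, rfl⟩
    · simp
    · exact Or.inr ⟨t, by omega, by push_cast; ring⟩
  · rintro (rfl | ⟨t, ht, rfl⟩)
    · exact ⟨0, by omega, by simp⟩
    · exact ⟨t + 1, by omega, by push_cast; ring⟩

theorem disjoint_cycInt_add (h : T + L ≤ N) (j : ZMod N) :
    Disjoint (cycInt N T j) (cycInt N L (j + T)) := by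
  rw [disjoint_left]
  intro x hx hx'
  obtain ⟨s, hs, rfl⟩ := mem_image.1 hx
  obtain ⟨t, ht, hts⟩ := mem_image.1 hx'
  simp only [mem_range] at hs ht
  rw [add_assoc, add_right_inj, ← Nat.cast_add, ZMod.natCast_eq_natCast_iff',
    Nat.mod_eq_of_lt (by omega), Nat.mod_eq_of_lt (by omega)] at hts
  omega

theorem disjoint_cycInt_of_mem_cycInt_add {R S : ℕ} {j y : ZMod N} (hy : y ∈ cycInt N R (j + S))
    (h : S + R + T ≤ N + 1) : Disjoint (cycInt N S j) (cycInt N T y) := by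
  obtain ⟨r, hr, rfl⟩ := mem_image.1 hy
  have hr := mem_range.1 hr
  exact (disjoint_cycInt_add (L := N - S) (by omega) j).mono_right
    (cycInt_add_subset (by omega) _)

theorem card_filter_not_disjoint_cycInt_le (T : ℕ) (K A : Finset (ZMod N)) :
    #{j ∈ A | ¬Disjoint (cycInt N T j) K} ≤ #K * T := by
  calc #{j ∈ A | ¬Disjoint (cycInt N T j) K}
      ≤ #(K.biUnion fun x => (range T).image fun t : ℕ => x - t) := by
        refine card_le_card fun j hj => ?_
        obtain ⟨x, hx, hxK⟩ := not_disjoint_iff.1 (mem_filter.1 hj).2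
        obtain ⟨t, ht, rfl⟩ := mem_image.1 hx
        exact mem_biUnion.2 ⟨_, hxK, mem_image.2 ⟨t, ht, by ring⟩⟩
    _ ≤ ∑ x ∈ K, #((range T).image fun t : ℕ => x - t) := card_biUnion_le
    _ ≤ ∑ _x ∈ K, T := sum_le_sum fun _ _ => card_image_le.trans (card_range T).le
    _ = #K * T := by rw [sum_const, smul_eq_mul]

theorem sub_one_mem_of_disjoint_cycInt {K : Finset (ZMod N)} {j : ZMod N}
    (hj : Disjoint (cycInt N T j) K) (hj₁ : ¬Disjoint (cycInt N T (j - 1)) K) : j - 1 ∈ K := by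
  obtain ⟨y, hy, hyK⟩ := not_disjoint_iff.1 hj₁
  have hy' := cycInt_mono T.le_succ _ hy
  rw [cycInt_succ, sub_add_cancel] at hy'
  rcases mem_insert.1 hy' with rfl | hy'
  · exact hyK
  · exact absurd hyK (disjoint_left.1 hj hy')

variable [NeZero N]

theorem exists_disjoint_cycInt (K : Finset (ZMod N)) (h : #K * T < N) :
    ∃ j, Disjoint (cycInt N T j) K := by
  by_contra! hK
  have := card_filter_not_disjoint_cycInt_le T K univ
  rw [filter_true_of_mem fun j _ => hK j, card_univ, ZMod.card] at this
  omega

theorem exists_disjoint_cycInt_pair (hT : 0 < T) (hN : 2 * T ≤ N) (K : Finset (ZMod N))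
    (h : (#K + 1) * T < N) :
    ∃ j₁ j₂, Disjoint (cycInt N T j₁) (cycInt N T j₂) ∧
      Disjoint (cycInt N T j₁) K ∧ Disjoint (cycInt N T j₂) K := by
  rcases K.eq_empty_or_nonempty with rfl | ⟨x, hx⟩
  · exact ⟨0, 0 + T, disjoint_cycInt_add (by omega) 0, disjoint_empty_right _,
      disjoint_empty_right _⟩
  obtain ⟨j, hj, hj₁⟩ := ZMod.exists_and_not_sub_one (p := fun j => Disjoint (cycInt N T j) K)
    (exists_disjoint_cycInt K (lt_of_le_of_lt (Nat.mul_le_mul_right T (Nat.le_succ #K)) h))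
    ⟨x, not_disjoint_iff.2 ⟨x, self_mem_cycInt hT x, hx⟩⟩
  have hjK : j - 1 ∈ K := sub_one_mem_of_disjoint_cycInt hj hj₁
  by_contra! hpair
  -- The `N - 2 * T` intervals starting in `cycInt N (N - 2 * T) (j + T)` avoid both
  -- `cycInt N T j` and the point `j - 1`, so they are all blocked by `K.erase (j - 1)`.
  have hL : cycInt N (T + 1) (j - 1) = insert (j - 1) (cycInt N T j) := by
    rw [cycInt_succ, sub_add_cancel]
  have hblocked : ∀ y ∈ cycInt N (N - 2 * T) (j + T),
      ¬Disjoint (cycInt N T y) (K.erase (j - 1)) := by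
    intro y hy
    have hfar : Disjoint (cycInt N (T + 1) (j - 1)) (cycInt N T y) :=
      disjoint_cycInt_of_mem_cycInt_add (R := N - 2 * T)
        (by convert hy using 2; push_cast; ring) (by omega)
    obtain ⟨z, hz, hzK⟩ := not_disjoint_iff.1
      (hpair j y (hfar.mono_left (hL ▸ subset_insert _ _)) hj)
    refine not_disjoint_iff.2 ⟨z, hz, mem_erase.2 ⟨?_, hzK⟩⟩
    rintro rfl
    exact disjoint_left.1 hfar (hL ▸ mem_insert_self _ _) hz
  have hcount :=
    card_filter_not_disjoint_cycInt_le T (K.erase (j - 1)) (cycInt N (N - 2 * T) (j + T))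
  rw [filter_true_of_mem hblocked, card_cycInt (by omega), card_erase_of_mem hjK] at hcount
  obtain ⟨k, hk⟩ : ∃ k, #K = k + 1 :=
    ⟨_, (Nat.succ_pred_eq_of_pos (card_pos.2 ⟨x, hx⟩)).symm⟩
  rw [hk, Nat.add_sub_cancel] at hcount
  rw [hk, show (k + 1 + 1) * T = k * T + 2 * T by ring] at h
  omega

end CyclicInterval

def gridPoints (N T : ℕ) : Finset (ZMod N) :=
  (range (N ⌈/⌉ T)).image fun k => ((k * T : ℕ) : ZMod N)

section Grid

variable {N T : ℕ}

theorem card_gridPoints (hT : 0 < T) : #(gridPoints N T) = N ⌈/⌉ T := by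
  rw [gridPoints, card_image_of_injOn, card_range]
  intro a ha b hb hab
  simp only [coe_range, Set.mem_Iio, Nat.lt_ceilDiv_iff_mul_lt hT] at ha hb
  simp only [ZMod.natCast_eq_natCast_iff', Nat.mod_eq_of_lt (mul_comm a T ▸ ha),
    Nat.mod_eq_of_lt (mul_comm b T ▸ hb)] at hab
  exact Nat.eq_of_mul_eq_mul_right hT hab

theorem not_disjoint_cycInt_gridPoints [NeZero N] (hT : 0 < T) (j : ZMod N) :
    ¬Disjoint (cycInt N T j) (gridPoints N T) := by
  obtain ⟨v, hv, rfl⟩ : ∃ v < N, (v : ZMod N) = j :=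
    ⟨j.val, j.val_lt, ZMod.natCast_zmod_val j⟩
  -- `T * k` is the first multiple of `T` at or after `v`; if it is not below `N`, take `0` instead.
  obtain ⟨k, hk⟩ : ∃ k, v ⌈/⌉ T = k := ⟨_, rfl⟩
  have hk₁ : v ≤ T * k := hk ▸ le_smul_ceilDiv hT
  have hk₂ : T * k < v + T := by
    cases k with
    | zero => omega
    | succ k =>
      have := (Nat.lt_ceilDiv_iff_mul_lt (a := v) (c := k) hT).1 (by omega)
      rw [Nat.mul_succ]
      omega
  rw [not_disjoint_iff]
  by_cases hkN : T * k < N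
  · refine ⟨((k * T : ℕ) : ZMod N), mem_image.2 ⟨T * k - v, mem_range.2 (by omega), ?_⟩,
      mem_image.2 ⟨k, mem_range.2 ((Nat.lt_ceilDiv_iff_mul_lt hT).2 hkN), rfl⟩⟩
    rw [← Nat.cast_add, Nat.add_sub_cancel' hk₁, mul_comm]
  · have hpos : 0 < N ⌈/⌉ T := (Nat.lt_ceilDiv_iff_mul_lt hT).2 (by simpa using NeZero.pos N)
    refine ⟨0, mem_image.2 ⟨N - v, mem_range.2 (by omega), ?_⟩,
      mem_image.2 ⟨0, mem_range.2 hpos, by simp⟩⟩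
    rw [← Nat.cast_add, Nat.add_sub_cancel' hv.le, ZMod.natCast_self]

end Grid

theorem Finset.inter_nonempty_of_subset_of_card_eq_sub_one {α : Type*} [DecidableEq α]
    {G H C₁ C₂ : Finset α} (hHG : H ⊆ G) (hH : #H = #G - 1) (h₁ : ¬Disjoint C₁ G)
    (h₂ : ¬Disjoint C₂ G) (h : Disjoint C₁ C₂) : ((C₁ ∪ C₂) ∩ H).Nonempty := by
  obtain ⟨x₁, hx₁, hx₁G⟩ := not_disjoint_iff.1 h₁
  obtain ⟨x₂, hx₂, hx₂G⟩ := not_disjoint_iff.1 h₂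
  have hne : x₁ ≠ x₂ := fun he => disjoint_left.1 h hx₁ (he ▸ hx₂)
  by_contra hempty
  have hsub : H ⊆ G \ {x₁, x₂} := fun y hy => mem_sdiff.2 ⟨hHG hy, by
    rintro hy'
    rcases mem_insert.1 hy' with rfl | hy'
    · exact hempty ⟨y, mem_inter.2 ⟨mem_union_left _ hx₁, hy⟩⟩
    · rw [mem_singleton.1 hy'] at hy
      exact hempty ⟨x₂, mem_inter.2 ⟨mem_union_right _ hx₂, hy⟩⟩⟩
  have hpair : {x₁, x₂} ⊆ G := insert_subset hx₁G (singleton_subset_iff.2 hx₂G)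
  have := card_le_card hsub
  rw [card_sdiff_of_subset hpair, card_pair hne] at this
  have := card_le_card hpair
  rw [card_pair hne] at this
  omega

section Colluding

variable {ι : Type*} [DecidableEq ι] {N T : ι → ℕ}

def colluding (N T : ι → ℕ) (i : ι) (j : ZMod (N i)) : Finset (Σ i, ZMod (N i)) :=
  (cycInt (N i) (T i) j).image (Sigma.mk i)

noncomputable def fiber (H : Finset (Σ i, ZMod (N i))) (i : ι) : Finset (ZMod (N i)) :=
  H.preimage (Sigma.mk (β := fun i => ZMod (N i)) i) sigma_mk_injective.injOn

theorem disjoint_colluding_of_ne {i₁ i₂ : ι} (h : i₁ ≠ i₂) (j₁ : ZMod (N i₁))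
    (j₂ : ZMod (N i₂)) :
    Disjoint (colluding N T i₁ j₁) (colluding N T i₂ j₂) := by
  simp only [colluding, disjoint_left, mem_image]
  rintro _ ⟨x, -, rfl⟩ ⟨y, -, hy⟩
  exact h (congrArg Sigma.fst hy).symm

theorem disjoint_colluding_iff (H : Finset (Σ i, ZMod (N i))) (i : ι) (j : ZMod (N i)) :
    Disjoint (colluding N T i j) H ↔
      Disjoint (cycInt (N i) (T i) j) (fiber H i) := by
  simp [colluding, fiber, disjoint_left]

theorem sum_ceilDiv_le_card_add_one [Fintype ι] [∀ i, NeZero (N i)] (hT : ∀ i, 0 < T i)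
    (hN : ∀ i, 2 * T i ≤ N i) (H : Finset (Σ i, ZMod (N i)))
    (hH : ∀ i₁ j₁ i₂ j₂, Disjoint (colluding N T i₁ j₁) (colluding N T i₂ j₂) →
      Disjoint (colluding N T i₁ j₁) H → ¬Disjoint (colluding N T i₂ j₂) H) :
    ∑ i, N i ⌈/⌉ T i ≤ #H + 1 := by
  set K := fiber H
  have hcard : #H = ∑ i, #(K i) := by
    rw [← card_sigma]
    exact congrArg card (sigma_preimage_mk_of_subset H (subset_univ _)).symm
  have hgroup :
      ∀ i, (∀ j, ¬Disjoint (cycInt (N i) (T i) j) (K i)) → N i ⌈/⌉ T i ≤ #(K i) := by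
    intro i h
    refine (ceilDiv_le_iff_le_mul (hT i)).2 (not_lt.1 fun hlt => ?_)
    obtain ⟨j, hj⟩ := exists_disjoint_cycInt (K i) (mul_comm (T i) _ ▸ hlt)
    exact h j hj
  by_cases hfree : ∃ a ja, Disjoint (cycInt (N a) (T a) ja) (K a)
  · obtain ⟨a, ja, hja⟩ := hfree
    have hbound : ∀ i, N i ⌈/⌉ T i ≤ #(K i) + if i = a then 1 else 0 := by
      intro i
      split_ifs with hi
      · subst hi
        refine (ceilDiv_le_iff_le_mul (hT i)).2 (not_lt.1 fun hlt => ?_)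
        obtain ⟨j₁, j₂, h₁₂, h₁, h₂⟩ :=
          exists_disjoint_cycInt_pair (hT i) (hN i) (K i) (mul_comm (T i) _ ▸ hlt)
        exact hH i j₁ i j₂ ((disjoint_image sigma_mk_injective).2 h₁₂)
          ((disjoint_colluding_iff H i j₁).2 h₁) ((disjoint_colluding_iff H i j₂).2 h₂)
      · refine (hgroup i fun j hj => ?_).trans (Nat.le_add_right _ _)
        exact hH a ja i j (disjoint_colluding_of_ne (Ne.symm hi) _ _)
          ((disjoint_colluding_iff H a ja).2 hja) ((disjoint_colluding_iff H i j).2 hj)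
    calc ∑ i, N i ⌈/⌉ T i ≤ ∑ i, (#(K i) + if i = a then 1 else 0) :=
          sum_le_sum fun i _ => hbound i
      _ = #H + 1 := by simp [sum_add_distrib, hcard]
  · simp only [not_exists] at hfree
    calc ∑ i, N i ⌈/⌉ T i ≤ ∑ i, #(K i) := sum_le_sum fun i _ => hgroup i (hfree i)
      _ ≤ #H + 1 := by omega

end Colluding

theorem hitting_number_disjoint_cyclic_contiguous_general (M : ℕ)
    (Nc T : Fin M → ℕ) (hT : ∀ i, 1 ≤ T i) (hN : ∀ i, 2 * T i ≤ Nc i) :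
    IsLeast {k : ℕ | ∃ H : Finset ((i : Fin M) × ZMod (Nc i)), H.card = k ∧
      ∀ S : Finset ((i : Fin M) × ZMod (Nc i)),
        (∃ C₁ C₂ : Finset ((i : Fin M) × ZMod (Nc i)),
          (∃ i j, C₁ = (cycInt (Nc i) (T i) j).image (Sigma.mk i)) ∧
          (∃ i j, C₂ = (cycInt (Nc i) (T i) j).image (Sigma.mk i)) ∧
          Disjoint C₁ C₂ ∧ C₁ ∪ C₂ ⊆ S) → (S ∩ H).Nonempty}
      (∑ i, ⌈(Nc i : ℚ) / (T i : ℚ)⌉₊ - 1) := by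
  have : ∀ i, NeZero (Nc i) := fun i => ⟨by have := hT i; have := hN i; omega⟩
  simp only [Nat.ceil_natCast_div_natCast]
  set G := univ.sigma fun i => gridPoints (Nc i) (T i)
  have hG : ∀ i j, ¬Disjoint (colluding Nc T i j) G := fun i j hdisj => by
    obtain ⟨x, hx, hxG⟩ := not_disjoint_iff.1 (not_disjoint_cycInt_gridPoints (hT i) j)
    exact disjoint_left.1 hdisj (mem_image_of_mem _ hx) (mem_sigma.2 ⟨mem_univ i, hxG⟩)
  refine ⟨?_, ?_⟩
  · obtain ⟨H, hHG, hH⟩ := exists_subset_card_eq (Nat.sub_le #G 1)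
    refine ⟨H, ?_, ?_⟩
    · rw [hH, card_sigma, sum_congr rfl fun i _ => card_gridPoints (hT i)]
    rintro S ⟨_, _, ⟨i₁, j₁, rfl⟩, ⟨i₂, j₂, rfl⟩, hdisj, hS⟩
    exact (inter_nonempty_of_subset_of_card_eq_sub_one hHG hH (hG i₁ j₁) (hG i₂ j₂)
      hdisj).mono (inter_subset_inter_right hS)
  · rintro n ⟨H, rfl, hH⟩
    have := sum_ceilDiv_le_card_add_one hT hN H fun i₁ j₁ i₂ j₂ hdisj h₁ h₂ => by
      obtain ⟨x, hx⟩ :=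
        hH _ ⟨_, _, ⟨i₁, j₁, rfl⟩, ⟨i₂, j₂, rfl⟩, hdisj, subset_rfl⟩
      obtain ⟨hx, hxH⟩ := mem_inter.1 hx
      rcases mem_union.1 hx with hx | hx
      · exact disjoint_left.1 h₁ hx hxH
      · exact disjoint_left.1 h₂ hx hxH
    omega

/-- For `M` disjoint groups, the `i`-th identified with `ZMod (Nc i)` and with colluding
sets the cyclic intervals of length `T i`, the hitting number of the family of sets
containing two disjoint colluding sets (from the same or different groups) equals
`Σ_i ⌈Nc i / T i⌉ - 1`. -/
theorem hitting_number_disjoint_cyclic_contiguous (M : ℕ) (hM : 1 ≤ M)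
    (Nc T : Fin M → ℕ) (hT : ∀ i, 1 ≤ T i) (hN : ∀ i, 2 * T i ≤ Nc i) :
    IsLeast {k : ℕ | ∃ H : Finset ((i : Fin M) × ZMod (Nc i)), H.card = k ∧
      ∀ S : Finset ((i : Fin M) × ZMod (Nc i)),
        (∃ C₁ C₂ : Finset ((i : Fin M) × ZMod (Nc i)),
          (∃ i j, C₁ = (cycInt (Nc i) (T i) j).image (Sigma.mk i)) ∧
          (∃ i j, C₂ = (cycInt (Nc i) (T i) j).image (Sigma.mk i)) ∧
          Disjoint C₁ C₂ ∧ C₁ ∪ C₂ ⊆ S) → (S ∩ H).Nonempty}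
      (∑ i, ⌈(Nc i : ℚ) / (T i : ℚ)⌉₊ - 1) :=
  hitting_number_disjoint_cyclic_contiguous_general M Nc T hT hN
end

section
/- Fractional Shearer's lemma: Let X_1,...,X_n be jointly distributed discrete random variables, and let α : P → Q_+ be a fractional covering of [1:n] with respect to a family P of subsets of [1:n], i.e., Σ_{S ∈ P : i ∈ S} α(S) ≥ 1 for all i. Then H(X_{[1:n]}) ≤ Σ_{S ∈ P} α(S) H(X_S). -/
/-! The map `S ↦ H(X_S)` is monotone and submodular with `H(X_∅) = 0`. Submodularity is
Gibbs' inequality `log x ≤ x - 1`, comparing the law of `(f, g, h)` with the law under which `f`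
and `h` are conditionally independent given `g`. For such a set function, order the coordinates
and write `H(X_{[1:n]})` as the sum of the increments `c_i = H(X_{≤ i}) - H(X_{< i}) ≥ 0`.
Submodularity gives `∑_{i ∈ S} c_i ≤ H(X_S)`, and as every `i` is covered with total weight at
least one, `∑_i c_i ≤ ∑_S α(S) ∑_{i ∈ S} c_i ≤ ∑_S α(S) H(X_S)`. -/

/-- Shannon entropy (in nats) of the discrete random variable `f` on the finite
probability space `Ω` with probability mass function `p`. -/
noncomputable def ent {Ω α : Type*} [Fintype Ω] [Fintype α] [DecidableEq α]
    (p : Ω → ℝ) (f : Ω → α) : ℝ :=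
  ∑ a : α, Real.negMulLog (∑ ω ∈ Finset.univ.filter (fun ω => f ω = a), p ω)

open Finset Real

section Entropy

variable {Ω α β γ : Type*} [Fintype Ω] [DecidableEq α] [DecidableEq β] [DecidableEq γ]
  {p : Ω → ℝ}

def mass (p : Ω → ℝ) (f : Ω → α) (a : α) : ℝ :=
  ∑ ω ∈ univ with f ω = a, p ω

lemma le_mass (hp0 : ∀ ω, 0 ≤ p ω) (f : Ω → α) (ω : Ω) : p ω ≤ mass p f (f ω) :=
  single_le_sum (fun ω _ => hp0 ω) (by simp)

lemma mass_le_mass_comp (hp0 : ∀ ω, 0 ≤ p ω) (φ : α → β) (f : Ω → α) (ω : Ω) :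
    mass p f (f ω) ≤ mass p (φ ∘ f) (φ (f ω)) :=
  sum_le_sum_of_subset_of_nonneg (by intro ω'; simp +contextual) fun ω _ _ => hp0 ω

lemma mass_nonneg (hp0 : ∀ ω, 0 ≤ p ω) (f : Ω → α) (a : α) : 0 ≤ mass p f a :=
  sum_nonneg fun ω _ => hp0 ω

lemma mass_congr {f : Ω → α} {g : Ω → β} (hfg : ∀ ω ω', f ω' = f ω ↔ g ω' = g ω) (ω : Ω) :
    mass p f (f ω) = mass p g (g ω) := by
  simp only [mass, hfg ω]

lemma sum_mass_pair_left [Fintype α] (f : Ω → α) (g : Ω → β) (b : β) :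
    ∑ a, mass p (fun ω => (f ω, g ω)) (a, b) = mass p g b := by
  rw [mass, ← sum_fiberwise _ f]
  simp only [mass, filter_filter, Prod.mk.injEq, and_comm]

lemma sum_mass_pair_right [Fintype β] (f : Ω → α) (g : Ω → β) (a : α) :
    ∑ b, mass p (fun ω => (f ω, g ω)) (a, b) = mass p f a := by
  rw [mass, ← sum_fiberwise _ g]
  simp only [mass, filter_filter, Prod.mk.injEq]

variable [Fintype α] [Fintype β] [Fintype γ]

lemma sum_mass_mul (f : Ω → α) (F : α → ℝ) :
    ∑ a, mass p f a * F a = ∑ ω, p ω * F (f ω) := by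
  simp_rw [mass, sum_mul]
  rw [← sum_fiberwise univ f (fun ω => p ω * F (f ω))]
  refine sum_congr rfl fun a _ => sum_congr rfl fun ω hω => ?_
  rw [(mem_filter.mp hω).2]

lemma sum_mass (f : Ω → α) : ∑ a, mass p f a = ∑ ω, p ω := by
  simpa using sum_mass_mul (p := p) f 1

lemma ent_eq_sum_mul_neg_log_mass (f : Ω → α) :
    ent p f = ∑ ω, p ω * -log (mass p f (f ω)) := by
  rw [← sum_mass_mul f fun a => -log (mass p f a)]
  simp only [ent, negMulLog, mass, neg_mul, mul_neg]

lemma ent_congr {f : Ω → α} {g : Ω → β} (hfg : ∀ ω ω', f ω' = f ω ↔ g ω' = g ω) :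
    ent p f = ent p g := by
  simp only [ent_eq_sum_mul_neg_log_mass, mass_congr hfg]

lemma ent_comp_le (hp0 : ∀ ω, 0 ≤ p ω) (φ : α → β) (f : Ω → α) :
    ent p (φ ∘ f) ≤ ent p f := by
  rw [ent_eq_sum_mul_neg_log_mass, ent_eq_sum_mul_neg_log_mass]
  refine sum_le_sum fun ω _ => ?_
  rcases (hp0 ω).eq_or_lt with hp | hp
  · simp [← hp]
  · gcongr
    · exact hp.trans_le (le_mass hp0 f ω)
    · exact mass_le_mass_comp hp0 φ f ω

lemma ent_of_subsingleton [Subsingleton α] (hp1 : ∑ ω, p ω = 1) (f : Ω → α) :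
    ent p f = 0 := by
  have h_mass : ∀ ω, mass p f (f ω) = 1 := fun ω => by
    rw [mass, filter_true_of_mem fun _ _ => Subsingleton.elim _ _, hp1]
  simp [ent_eq_sum_mul_neg_log_mass, h_mass]

lemma sum_mul_div_mass_le {f : Ω → α} {Q : α → ℝ} (hQ : ∀ a, 0 ≤ Q a) :
    ∑ ω, p ω * (Q (f ω) / mass p f (f ω)) ≤ ∑ a, Q a := by
  rw [← sum_mass_mul f fun a => Q a / mass p f a]
  refine sum_le_sum fun a _ => ?_
  rcases eq_or_ne (mass p f a) 0 with h | h
  · simp [h, hQ a]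
  · rw [mul_div_cancel₀ _ h]

lemma ent_submodular (hp0 : ∀ ω, 0 ≤ p ω) (f : Ω → α) (g : Ω → β) (h : Ω → γ) :
    ent p (fun ω => (f ω, g ω, h ω)) + ent p g ≤
      ent p (fun ω => (f ω, g ω)) + ent p (fun ω => (g ω, h ω)) := by
  set fg := fun ω => (f ω, g ω)
  set gh := fun ω => (g ω, h ω)
  set fgh := fun ω => (f ω, g ω, h ω)
  -- `Q` is the joint law of `(f, g, h)` that makes `f` and `h` conditionally independent given `g`
  set Q : α × β × γ → ℝ := fun x => mass p fg (x.1, x.2.1) * mass p gh x.2 / mass p g x.2.1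
  have hQ_sum : ∑ x, Q x = ∑ ω, p ω := calc
    ∑ x, Q x = ∑ b, ∑ a, ∑ c, mass p fg (a, b) * mass p gh (b, c) / mass p g b := by
      simp only [Q, Fintype.sum_prod_type]
      exact sum_comm
    _ = ∑ b, (∑ a, mass p fg (a, b)) * (∑ c, mass p gh (b, c)) / mass p g b := by
      simp only [sum_mul_sum, sum_div]
    _ = ∑ ω, p ω := by
      simp only [fg, gh, sum_mass_pair_left, sum_mass_pair_right, mul_self_div_self, sum_mass]
  have h_gibbs := sum_mul_div_mass_le (p := p) (f := fgh) (Q := Q)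
    fun x => div_nonneg (mul_nonneg (mass_nonneg hp0 _ _) (mass_nonneg hp0 _ _))
      (mass_nonneg hp0 _ _)
  have h_pointwise : ∀ ω, p ω * -log (mass p fgh (fgh ω)) + p ω * -log (mass p g (g ω)) ≤
      p ω * -log (mass p fg (fg ω)) + p ω * -log (mass p gh (gh ω)) +
        (p ω * (Q (fgh ω) / mass p fgh (fgh ω)) - p ω) := by
    intro ω
    rcases (hp0 ω).eq_or_lt with hp | hp
    · simp [← hp]
    have hR := hp.trans_le (le_mass hp0 fgh ω)
    have hA := hp.trans_le (le_mass hp0 fg ω)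
    have hB := hp.trans_le (le_mass hp0 g ω)
    have hC := hp.trans_le (le_mass hp0 gh ω)
    have h_log := log_le_sub_one_of_pos (div_pos (div_pos (mul_pos hA hC) hB) hR)
    rw [log_div (by positivity) hR.ne', log_div (by positivity) hB.ne',
      log_mul hA.ne' hC.ne'] at h_log
    have := mul_le_mul_of_nonneg_left h_log hp.le
    simp only [Q]
    linarith
  have h_sum := sum_le_sum fun ω (_ : ω ∈ univ) => h_pointwise ω
  simp only [sum_add_distrib, sum_sub_distrib, ← ent_eq_sum_mul_neg_log_mass] at h_sum
  linarith

end Entropy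

section Submodular

lemma insert_sub_le_insert_sub_of_subset {ι : Type*} [DecidableEq ι] {h : Finset ι → ℝ}
    (h_submod : ∀ s t, h (s ∪ t) + h (s ∩ t) ≤ h s + h t) {s t : Finset ι} {i : ι}
    (hst : s ⊆ t) (hi : i ∉ t) :
    h (insert i t) - h t ≤ h (insert i s) - h s := by
  have h_union : insert i s ∪ t = insert i t := by
    rw [insert_union, union_eq_right.mpr hst]
  have h_inter : insert i s ∩ t = s := by
    rw [insert_inter_of_notMem hi, inter_eq_left.mpr hst]
  have := h_submod (insert i s) t
  rw [h_union, h_inter] at this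
  linarith

variable {ι : Type*} [LinearOrder ι] [LocallyFiniteOrderBot ι]

def chainIncrement (h : Finset ι → ℝ) (i : ι) : ℝ :=
  h (insert i (Iio i)) - h (Iio i)

lemma chainIncrement_nonneg {h : Finset ι → ℝ} (h_mono : Monotone h) (i : ι) :
    0 ≤ chainIncrement h i :=
  sub_nonneg.mpr (h_mono (subset_insert i _))

lemma sum_chainIncrement_le {h : Finset ι → ℝ}
    (h_submod : ∀ s t, h (s ∪ t) + h (s ∩ t) ≤ h s + h t) (s : Finset ι) :
    ∑ i ∈ s, chainIncrement h i ≤ h s - h ∅ := by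
  induction s using Finset.induction_on_max with
  | empty => simp
  | insert i s hlt ih =>
    have hs : s ⊆ Iio i := fun j hj => mem_Iio.mpr (hlt j hj)
    have hi : i ∉ s := fun hi => lt_irrefl i (hlt i hi)
    have h_inc : chainIncrement h i ≤ h (insert i s) - h s :=
      insert_sub_le_insert_sub_of_subset h_submod hs notMem_Iio_self
    rw [sum_insert hi]
    linarith

lemma sum_chainIncrement_of_isLowerSet (h : Finset ι → ℝ) {s : Finset ι}
    (hs : IsLowerSet (s : Set ι)) :
    ∑ i ∈ s, chainIncrement h i = h s - h ∅ := by
  induction s using Finset.induction_on_max with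
  | empty => simp
  | insert i s hlt ih =>
    have hs_eq : s = Iio i := by
      ext j
      refine ⟨fun hj => mem_Iio.mpr (hlt j hj), fun hj => ?_⟩
      have hj' : j ∈ insert i s := hs (le_of_lt (mem_Iio.mp hj)) (by simp)
      exact (mem_insert.mp hj').resolve_left (ne_of_lt (mem_Iio.mp hj))
    subst hs_eq
    rw [sum_insert notMem_Iio_self, ih (by simpa using isLowerSet_Iio i)]
    unfold chainIncrement
    ring

def IsFractionalCover (P : Finset (Finset ι)) (a : Finset ι → ℝ) : Prop :=
  (∀ S, 0 ≤ a S) ∧ ∀ i, 1 ≤ ∑ S ∈ P with i ∈ S, a S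

theorem shearer_of_submodular [Fintype ι] {h : Finset ι → ℝ} (h_empty : h ∅ = 0)
    (h_mono : Monotone h) (h_submod : ∀ s t, h (s ∪ t) + h (s ∩ t) ≤ h s + h t)
    {P : Finset (Finset ι)} {a : Finset ι → ℝ} (ha : IsFractionalCover P a) :
    h univ ≤ ∑ S ∈ P, a S * h S := by
  have h_chain :=
    sum_chainIncrement_of_isLowerSet h (s := univ) (by simpa using isLowerSet_univ)
  calc h univ = ∑ i, chainIncrement h i := by rw [h_chain, h_empty, sub_zero]
    _ ≤ ∑ i, ∑ S ∈ P with i ∈ S, a S * chainIncrement h i := by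
      gcongr with i
      rw [← sum_mul]
      exact le_mul_of_one_le_left (chainIncrement_nonneg h_mono i) (ha.2 i)
    _ = ∑ S ∈ P, a S * ∑ i ∈ S, chainIncrement h i := by
      simp_rw [mul_sum]
      exact sum_comm' (by simp [and_comm])
    _ ≤ ∑ S ∈ P, a S * h S := by
      gcongr with S
      · exact ha.1 S
      · simpa [h_empty] using sum_chainIncrement_le h_submod S

end Submodular

lemma tuple_eq_tuple_iff {ι Ω 𝒳 : Type*} (X : ι → Ω → 𝒳) (s : Finset ι) (ω ω' : Ω) :
    (fun i : {i // i ∈ s} => X i.1 ω) = (fun i => X i.1 ω') ↔ ∀ i ∈ s, X i ω = X i ω' := by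
  simp [funext_iff]

section JointEntropy

variable {ι Ω 𝒳 : Type*} [DecidableEq ι] [Fintype Ω] [Fintype 𝒳] [DecidableEq 𝒳]
  {p : Ω → ℝ}

noncomputable def jointEnt (p : Ω → ℝ) (X : ι → Ω → 𝒳) (s : Finset ι) : ℝ :=
  ent p (fun ω => fun i : {i // i ∈ s} => X i.1 ω)

lemma jointEnt_empty (hp1 : ∑ ω, p ω = 1) (X : ι → Ω → 𝒳) : jointEnt p X ∅ = 0 :=
  ent_of_subsingleton hp1 _

lemma jointEnt_mono (hp0 : ∀ ω, 0 ≤ p ω) (X : ι → Ω → 𝒳) : Monotone (jointEnt p X) :=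
  fun s t hst =>
    ent_comp_le hp0 (fun (v : {i // i ∈ t} → 𝒳) (i : {i // i ∈ s}) => v ⟨i.1, hst i.2⟩)
      (fun ω => fun i : {i // i ∈ t} => X i.1 ω)

lemma jointEnt_union_add_inter_le (hp0 : ∀ ω, 0 ≤ p ω) (X : ι → Ω → 𝒳) (s t : Finset ι) :
    jointEnt p X (s ∪ t) + jointEnt p X (s ∩ t) ≤ jointEnt p X s + jointEnt p X t := by
  have h := ent_submodular hp0 (fun ω => fun i : {i // i ∈ s \ t} => X i.1 ω)
    (fun ω => fun i : {i // i ∈ s ∩ t} => X i.1 ω) (fun ω => fun i : {i // i ∈ t \ s} => X i.1 ω)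
  convert h using 2 <;> unfold jointEnt <;> apply ent_congr <;> intro ω ω' <;>
    simp only [Prod.mk.injEq, tuple_eq_tuple_iff, mem_union, mem_inter, mem_sdiff] <;> grind

lemma ent_eq_jointEnt_univ [Fintype ι] (X : ι → Ω → 𝒳) :
    ent p (fun ω => fun i => X i ω) = jointEnt p X univ :=
  ent_congr fun ω ω' => by simp [funext_iff]

end JointEntropy

/-- Fractional Shearer's lemma: if `α` is a fractional covering of `[1:n]` with respect
to a family `P` of subsets of `[1:n]`, then
`H(X_{[1:n]}) ≤ Σ_{S ∈ P} α(S) H(X_S)`. -/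
theorem fractional_shearer (n : ℕ) {Ω 𝒳 : Type*} [Fintype Ω] [Fintype 𝒳] [DecidableEq 𝒳]
    (p : Ω → ℝ) (hp0 : ∀ ω, 0 ≤ p ω) (hp1 : ∑ ω, p ω = 1)
    (X : Fin n → Ω → 𝒳)
    (P : Finset (Finset (Fin n))) (a : Finset (Fin n) → ℚ)
    (ha0 : ∀ S, 0 ≤ a S)
    (hcov : ∀ i : Fin n, 1 ≤ ∑ S ∈ P.filter (fun S => i ∈ S), a S) :
    ent p (fun ω => fun i : Fin n => X i ω) ≤
      ∑ S ∈ P, (a S : ℝ) * ent p (fun ω => fun i : {i // i ∈ S} => X i.1 ω) := by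
  rw [ent_eq_jointEnt_univ]
  exact shearer_of_submodular (jointEnt_empty hp1 X) (jointEnt_mono hp0 X)
    (jointEnt_union_add_inter_le hp0 X)
    ⟨fun S => by beta_reduce; exact_mod_cast ha0 S,
      fun i => by beta_reduce; exact_mod_cast hcov i⟩
end

section
/- For the linear program maximize 1^T y subject to B^T y ≤ 1 and y ≥ 0, where B is the N × N incidence matrix of the cyclically T-contiguous collusion pattern (each column is the indicator of a cyclic interval of length T in Z_N), the optimal value is N/T, attained by y_i = 1/T for all i. -/
open Finset

theorem Finset.sum_sum_eq_nsmul_sum_of_card_filter_mem {ι α M : Type*} [Fintype ι] [Fintype α]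
    [DecidableEq α] [AddCommMonoid M] (s : ι → Finset α) (k : ℕ)
    (hk : ∀ a, #{i | a ∈ s i} = k) (f : α → M) :
    ∑ i, ∑ a ∈ s i, f a = k • ∑ a, f a := by
  rw [Finset.sum_comm' (t' := univ) (s' := fun a => {i | a ∈ s i}) (by simp), smul_sum]
  simp only [sum_const, hk]

theorem ZMod.natCast_injOn_range {N T : ℕ} (hTN : T ≤ N) :
    Set.InjOn (Nat.cast : ℕ → ZMod N) (range T) := by
  intro a ha b hb hab
  simp only [coe_range, Set.mem_Iio] at ha hb
  rw [← ZMod.val_cast_of_lt (ha.trans_le hTN), hab, ZMod.val_cast_of_lt (hb.trans_le hTN)]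

theorem card_cycInt_le (N T : ℕ) (m : ZMod N) : #(cycInt N T m) ≤ T :=
  card_image_le.trans_eq (card_range T)

theorem card_filter_mem_cycInt {N T : ℕ} [NeZero N] (hTN : T ≤ N) (n : ZMod N) :
    #{m | n ∈ cycInt N T m} = T := by
  have hwindows : ({m | n ∈ cycInt N T m} : Finset (ZMod N))
      = (range T).image (fun t : ℕ => n - (t : ZMod N)) := by
    ext m
    simp only [mem_filter, mem_univ, true_and, cycInt, mem_image]
    exact exists_congr fun t => and_congr_right' (by rw [sub_eq_iff_eq_add, eq_comm])
  rw [hwindows, card_image_of_injOn, card_range]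
  exact (sub_right_injective.comp_injOn (ZMod.natCast_injOn_range hTN) :)

theorem sum_sum_cycInt {N T : ℕ} [NeZero N] (hTN : T ≤ N) (y : ZMod N → ℝ) :
    ∑ m, ∑ n ∈ cycInt N T m, y n = T * ∑ n, y n := by
  rw [sum_sum_eq_nsmul_sum_of_card_filter_mem _ T (card_filter_mem_cycInt hTN), nsmul_eq_mul]

/-- For the LP `max 1ᵀy s.t. Bᵀy ≤ 1, y ≥ 0` with `B` the incidence matrix of the
cyclically `T`-contiguous collusion pattern on `Z_N`, the optimal value is `N/T`,
attained by `y_i = 1/T` for all `i`. -/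
theorem lp_cyclic_contiguous_optimal (N T : ℕ) [NeZero N] (hT : 1 ≤ T) (hTN : T ≤ N) :
    (∀ m : ZMod N, ∑ _n ∈ cycInt N T m, (1 : ℝ) / T ≤ 1) ∧
    (∑ _n : ZMod N, (1 : ℝ) / T) = (N : ℝ) / T ∧
    (∀ y : ZMod N → ℝ, (∀ n, 0 ≤ y n) →
      (∀ m : ZMod N, ∑ n ∈ cycInt N T m, y n ≤ 1) →
      (∑ n : ZMod N, y n) ≤ (N : ℝ) / T) := by
  have hT₀ : (0 : ℝ) < T := by exact_mod_cast hT
  refine ⟨fun m => ?_, ?_, fun y _ hy => ?_⟩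
  · rw [sum_const, nsmul_eq_mul, mul_one_div, div_le_one hT₀]
    exact_mod_cast card_cycInt_le N T m
  · rw [sum_const, card_univ, ZMod.card, nsmul_eq_mul, mul_one_div]
  · rw [le_div_iff₀ hT₀, mul_comm, ← sum_sum_cycInt hTN]
    calc ∑ m, ∑ n ∈ cycInt N T m, y n ≤ ∑ _m : ZMod N, (1 : ℝ) := sum_le_sum fun m _ => hy m
      _ = N := by simp
end

section
/- In the proof of the disjoint-groups hitting number lower bound: if H ⊆ ⋃_i P_i intersects every union of two disjoint colluding sets, then for each i, H must contain a hitting set within P_i for unions of two disjoint colluding sets inside P_i (so |H ∩ P_i| ≥ ⌈N_i/T_i⌉ - 1), and additionally H can completely miss a colluding set in at most one group, which together yield |H| ≥ Σ_i ⌈N_i/T_i⌉ - 1. -/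
/-!
Inside a group `ZMod N`, cut the circle into consecutive blocks of length `T` starting just after a
point `a` of `H`: the `⌈N/T⌉ - 1` blocks that fit are disjoint intervals avoiding `a`, so if `H` has
at most `⌈N/T⌉ - 2` points there, two blocks miss `H` and their union is not hit.
Colluding sets of different groups are disjoint, so `H` misses a colluding set in at most one
group. In every other group `H` meets all `N` intervals while each point lies in at most `T` of
them, so `H` has at least `⌈N/T⌉` points there; summing over the groups gives the bound.
-/

open Finset

section CyclicIntervals

variable {N T : ℕ}

lemma mem_cycInt {j x : ZMod N} : x ∈ cycInt N T j ↔ ∃ t < T, j + (t : ZMod N) = x := by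
  simp [cycInt]

lemma ceil_div_le_iff (hT : 0 < T) {k : ℕ} : ⌈(N : ℚ) / T⌉₊ ≤ k ↔ N ≤ k * T := by
  rw [Nat.ceil_le, div_le_iff₀ (by exact_mod_cast hT)]
  norm_cast

variable [NeZero N]

lemma mem_cycInt_add_mul_iff (hT : 0 < T) {m : ℕ} (hm : (m + 1) * T ≤ N) (s x : ZMod N) :
    x ∈ cycInt N T (s + ((m * T : ℕ) : ZMod N)) ↔ (x - s).val / T = m := by
  rw [add_one_mul] at hm
  rw [mem_cycInt, Nat.div_eq_iff hT]
  constructor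
  · rintro ⟨t, ht, rfl⟩
    have hcast : s + ((m * T : ℕ) : ZMod N) + t - s = ((m * T + t : ℕ) : ZMod N) := by
      push_cast
      ring
    rw [hcast, ZMod.val_natCast_of_lt (by omega)]
    omega
  · intro h
    refine ⟨(x - s).val - m * T, by omega, ?_⟩
    rw [add_assoc, ← Nat.cast_add, Nat.add_sub_cancel' h.1, ZMod.natCast_zmod_val,
      add_sub_cancel]

lemma disjoint_cycInt_add_mul (hT : 0 < T) {m₁ m₂ : ℕ} (h₁ : (m₁ + 1) * T ≤ N)
    (h₂ : (m₂ + 1) * T ≤ N) (hne : m₁ ≠ m₂) (s : ZMod N) :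
    Disjoint (cycInt N T (s + ((m₁ * T : ℕ) : ZMod N)))
      (cycInt N T (s + ((m₂ * T : ℕ) : ZMod N))) := by
  rw [disjoint_left]
  intro x hx₁ hx₂
  rw [mem_cycInt_add_mul_iff hT h₁] at hx₁
  rw [mem_cycInt_add_mul_iff hT h₂] at hx₂
  exact hne (hx₁.symm.trans hx₂)

lemma card_filter_not_disjoint_cycInt_add_mul_le (hT : 0 < T) {q : ℕ} (hq : q * T ≤ N)
    (s : ZMod N) (A : Finset (ZMod N)) :
    #{m ∈ range q | ¬Disjoint (cycInt N T (s + ((m * T : ℕ) : ZMod N))) A} ≤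
      #{x ∈ A | (x - s).val < q * T} := by
  refine (card_le_card fun m hm => ?_).trans
    (card_image_le (f := fun x => (x - s).val / T))
  simp only [mem_filter, mem_range, not_disjoint_iff] at hm
  obtain ⟨hmq, x, hx, hxA⟩ := hm
  rw [mem_cycInt_add_mul_iff hT ((Nat.mul_le_mul_right T hmq).trans hq)] at hx
  refine mem_image.2 ⟨x, mem_filter.2 ⟨hxA, ?_⟩, hx⟩
  rwa [← Nat.div_lt_iff_lt_mul hT, hx]

lemma exists_disjoint_cycInt_of_two_le_card_filter (hT : 0 < T) {q : ℕ} (hq : q * T ≤ N)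
    (s : ZMod N) (A : Finset (ZMod N))
    (h : 2 ≤ #{m ∈ range q | Disjoint (cycInt N T (s + ((m * T : ℕ) : ZMod N))) A}) :
    ∃ j₁ j₂, Disjoint (cycInt N T j₁) (cycInt N T j₂) ∧
      Disjoint (cycInt N T j₁ ∪ cycInt N T j₂) A := by
  obtain ⟨m₁, hm₁, m₂, hm₂, hne⟩ := one_lt_card.1 h
  simp only [mem_filter, mem_range] at hm₁ hm₂
  exact ⟨_, _,
    disjoint_cycInt_add_mul hT ((Nat.mul_le_mul_right T hm₁.1).trans hq)
      ((Nat.mul_le_mul_right T hm₂.1).trans hq) hne s,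
    disjoint_union_left.2 ⟨hm₁.2, hm₂.2⟩⟩

lemma exists_disjoint_cycInt_of_card_add_two_le (hT : 0 < T) (hN : 2 * T ≤ N)
    (A : Finset (ZMod N)) (hA : #A + 2 ≤ ⌈(N : ℚ) / T⌉₊) :
    ∃ j₁ j₂, Disjoint (cycInt N T j₁) (cycInt N T j₂) ∧
      Disjoint (cycInt N T j₁ ∪ cycInt N T j₂) A := by
  obtain rfl | ⟨a, ha⟩ := A.eq_empty_or_nonempty
  · exact exists_disjoint_cycInt_of_two_le_card_filter hT hN 0 ∅ (by simp)
  set k := ⌈(N : ℚ) / T⌉₊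
  have hkT : (k - 1) * T < N := by
    by_contra! h
    have := (ceil_div_le_iff hT).2 h
    omega
  have ha_last : (a - (a + 1)).val = N - 1 := by
    obtain ⟨n, rfl⟩ := Nat.exists_eq_add_one_of_ne_zero (NeZero.ne N)
    simp [ZMod.val_neg_one n]
  have hsub : {x ∈ A | (x - (a + 1)).val < (k - 1) * T} ⊆ A.erase a := by
    intro x hx
    rw [mem_filter] at hx
    refine mem_erase.2 ⟨?_, hx.1⟩
    rintro rfl
    omega
  have hbad := (card_filter_not_disjoint_cycInt_add_mul_le hT hkT.le (a + 1) A).trans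
    (card_le_card hsub)
  have hsplit := card_filter_add_card_filter_not (s := range (k - 1))
    (fun m => Disjoint (cycInt N T (a + 1 + ((m * T : ℕ) : ZMod N))) A)
  rw [card_erase_of_mem ha] at hbad
  rw [card_range] at hsplit
  refine exists_disjoint_cycInt_of_two_le_card_filter hT hkT.le (a + 1) A ?_
  have hA_pos := card_pos.2 ⟨a, ha⟩
  omega

lemma ceil_div_sub_one_le_card (hT : 0 < T) (hN : 2 * T ≤ N) (A : Finset (ZMod N))
    (hA : ∀ j₁ j₂, Disjoint (cycInt N T j₁) (cycInt N T j₂) →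
      ¬Disjoint (cycInt N T j₁ ∪ cycInt N T j₂) A) :
    ⌈(N : ℚ) / T⌉₊ - 1 ≤ #A := by
  by_contra! h
  obtain ⟨j₁, j₂, hdisj, hmiss⟩ := exists_disjoint_cycInt_of_card_add_two_le hT hN A (by omega)
  exact hA j₁ j₂ hdisj hmiss

lemma ceil_div_le_card (hT : 0 < T) (A : Finset (ZMod N))
    (hA : ∀ j, ¬Disjoint (cycInt N T j) A) :
    ⌈(N : ℚ) / T⌉₊ ≤ #A := by
  rw [ceil_div_le_iff hT]
  have hcount := card_mul_le_card_mul (s := univ) (t := A) (m := 1) (n := T)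
    (fun j x => x ∈ cycInt N T j) (fun j _ => ?_) (fun x _ => ?_)
  · simpa [ZMod.card] using hcount
  · obtain ⟨x, hx, hxA⟩ := not_disjoint_iff.1 (hA j)
    exact card_pos.2 ⟨x, mem_filter.2 ⟨hxA, hx⟩⟩
  · refine (card_le_card fun j hj => ?_).trans
      ((card_image_le (s := range T) (f := fun t : ℕ => x - t)).trans (card_range T).le)
    obtain ⟨t, ht, rfl⟩ := mem_cycInt.1 (mem_filter.1 hj).2
    exact mem_image.2 ⟨t, mem_range.2 ht, by ring⟩

end CyclicIntervals

section Sigma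

variable {ι : Type*} {β : ι → Type*}

lemma Finset.card_preimage_sigmaMk [DecidableEq ι] (H : Finset (Σ i, β i)) (i : ι) :
    #(H.preimage (Sigma.mk i) sigma_mk_injective.injOn) = #{x ∈ H | x.1 = i} := by
  classical
  rw [card_preimage]
  simp [Set.range_sigmaMk]

lemma Finset.disjoint_image_sigmaMk_iff [DecidableEq ι] [∀ i, DecidableEq (β i)]
    (H : Finset (Σ i, β i)) (i : ι) (X : Finset (β i)) :
    Disjoint (X.image (Sigma.mk i)) H ↔
      Disjoint X (H.preimage (Sigma.mk i) sigma_mk_injective.injOn) := by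
  simp [disjoint_left]

end Sigma

section Groups

variable {ι : Type*} [DecidableEq ι] {N T : ι → ℕ}

def colludingSet (N T : ι → ℕ) (i : ι) (j : ZMod (N i)) : Finset (Σ i, ZMod (N i)) :=
  (cycInt (N i) (T i) j).image (Sigma.mk i)

def HitsDisjointPairs (N T : ι → ℕ) (H : Finset (Σ i, ZMod (N i))) : Prop :=
  ∀ i₁ j₁ i₂ j₂, Disjoint (colludingSet N T i₁ j₁) (colludingSet N T i₂ j₂) →
    ¬Disjoint (colludingSet N T i₁ j₁ ∪ colludingSet N T i₂ j₂) H

lemma disjoint_colludingSet_of_ne {i₁ i₂ : ι} (h : i₁ ≠ i₂) (j₁ : ZMod (N i₁))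
    (j₂ : ZMod (N i₂)) :
    Disjoint (colludingSet N T i₁ j₁) (colludingSet N T i₂ j₂) := by
  simp only [colludingSet, disjoint_left, mem_image]
  rintro _ ⟨n₁, -, rfl⟩ ⟨n₂, -, hn⟩
  exact h (congrArg Sigma.fst hn).symm

lemma disjoint_colludingSet_iff {H : Finset (Σ i, ZMod (N i))} {i : ι} {j : ZMod (N i)} :
    Disjoint (colludingSet N T i j) H ↔
      ∀ n ∈ cycInt (N i) (T i) j, (⟨i, n⟩ : Σ i, ZMod (N i)) ∉ H := by
  simp [colludingSet, disjoint_left]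

namespace HitsDisjointPairs

variable [∀ i, NeZero (N i)] {H : Finset (Σ i, ZMod (N i))}

lemma ceil_div_sub_one_le_card_filter (hH : HitsDisjointPairs N T H) (hT : ∀ i, 1 ≤ T i)
    (hN : ∀ i, 2 * T i ≤ N i) (i : ι) :
    ⌈(N i : ℚ) / (T i : ℚ)⌉₊ - 1 ≤ #{x ∈ H | x.1 = i} := by
  rw [← card_preimage_sigmaMk]
  refine ceil_div_sub_one_le_card (hT i) (hN i) _ fun j₁ j₂ hdisj => ?_
  rw [← disjoint_image_sigmaMk_iff H i, image_union]
  exact hH i j₁ i j₂ ((disjoint_image sigma_mk_injective).2 hdisj)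

lemma card_missed_groups_le_one [Fintype ι] (hH : HitsDisjointPairs N T H) :
    #{i | ∃ j : ZMod (N i), ∀ n ∈ cycInt (N i) (T i) j, (⟨i, n⟩ : Σ i, ZMod (N i)) ∉ H} ≤ 1 := by
  refine card_le_one.2 fun i₁ hi₁ i₂ hi₂ => by_contra fun hne => ?_
  obtain ⟨j₁, hj₁⟩ := (mem_filter.1 hi₁).2
  obtain ⟨j₂, hj₂⟩ := (mem_filter.1 hi₂).2
  exact hH i₁ j₁ i₂ j₂ (disjoint_colludingSet_of_ne hne j₁ j₂)
    (disjoint_union_left.2 ⟨disjoint_colludingSet_iff.2 hj₁, disjoint_colludingSet_iff.2 hj₂⟩)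

lemma sum_ceil_div_sub_one_le_card [Fintype ι] (hH : HitsDisjointPairs N T H)
    (hT : ∀ i, 1 ≤ T i) (hN : ∀ i, 2 * T i ≤ N i) :
    ∑ i, ⌈(N i : ℚ) / (T i : ℚ)⌉₊ - 1 ≤ #H := by
  set missed : Finset ι := {i | ∃ j : ZMod (N i), ∀ n ∈ cycInt (N i) (T i) j,
    (⟨i, n⟩ : Σ i, ZMod (N i)) ∉ H}
  have hgroup : ∀ i ∈ univ,
      ⌈(N i : ℚ) / (T i : ℚ)⌉₊ ≤ #{x ∈ H | x.1 = i} + if i ∈ missed then 1 else 0 := by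
    intro i _
    split_ifs with hi
    · have := hH.ceil_div_sub_one_le_card_filter hT hN i
      omega
    · rw [← card_preimage_sigmaMk, add_zero]
      refine ceil_div_le_card (hT i) _ fun j hj => hi ?_
      rw [← disjoint_image_sigmaMk_iff H i] at hj
      exact mem_filter.2 ⟨mem_univ i, j, disjoint_colludingSet_iff.1 hj⟩
  have hsum := calc
    ∑ i, ⌈(N i : ℚ) / (T i : ℚ)⌉₊
      ≤ ∑ i, (#{x ∈ H | x.1 = i} + if i ∈ missed then 1 else 0) := sum_le_sum hgroup
    _ = #H + #missed := by
      rw [sum_add_distrib, ← card_eq_sum_card_fiberwise fun x _ => mem_univ x.1, sum_boole,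
        filter_mem_eq_inter, univ_inter, Nat.cast_id]
  have hmissed : #missed ≤ 1 := hH.card_missed_groups_le_one
  omega

end HitsDisjointPairs

end Groups

theorem disjoint_groups_hitting_lower_bound_steps_general (M : ℕ)
    (Nc T : Fin M → ℕ) [∀ i, NeZero (Nc i)]
    (hT : ∀ i, 1 ≤ T i) (hN : ∀ i, 2 * T i ≤ Nc i)
    (H : Finset ((i : Fin M) × ZMod (Nc i)))
    (hhit : ∀ S : Finset ((i : Fin M) × ZMod (Nc i)),
      (∃ C₁ C₂ : Finset ((i : Fin M) × ZMod (Nc i)),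
        (∃ i j, C₁ = (cycInt (Nc i) (T i) j).image (Sigma.mk i)) ∧
        (∃ i j, C₂ = (cycInt (Nc i) (T i) j).image (Sigma.mk i)) ∧
        Disjoint C₁ C₂ ∧ C₁ ∪ C₂ ⊆ S) → (S ∩ H).Nonempty) :
    (∀ i : Fin M,
      ⌈(Nc i : ℚ) / (T i : ℚ)⌉₊ - 1 ≤ (H.filter (fun x => x.1 = i)).card) ∧
    ((Finset.univ.filter (fun i : Fin M =>
        ∃ j : ZMod (Nc i), ∀ n ∈ cycInt (Nc i) (T i) j,
          (⟨i, n⟩ : (i : Fin M) × ZMod (Nc i)) ∉ H)).card ≤ 1) ∧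
    (∑ i, ⌈(Nc i : ℚ) / (T i : ℚ)⌉₊ - 1 ≤ H.card) := by
  have hH : HitsDisjointPairs Nc T H := fun i₁ j₁ i₂ j₂ hdisj =>
    not_disjoint_iff_nonempty_inter.2 <|
      hhit _ ⟨_, _, ⟨i₁, j₁, rfl⟩, ⟨i₂, j₂, rfl⟩, hdisj, subset_rfl⟩
  exact ⟨hH.ceil_div_sub_one_le_card_filter hT hN, hH.card_missed_groups_le_one,
    hH.sum_ceil_div_sub_one_le_card hT hN⟩

/-- In the disjoint-groups setting (groups identified with `ZMod (Nc i)`, colluding sets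
the cyclic intervals of length `T i`), if `H` hits every union of two disjoint colluding
sets, then: within each group `H` contains at least `⌈Nc i / T i⌉ - 1` elements; `H` can
completely miss a colluding set in at most one group; and
`|H| ≥ Σ_i ⌈Nc i / T i⌉ - 1`. -/
theorem disjoint_groups_hitting_lower_bound_steps (M : ℕ) (hM : 2 ≤ M)
    (Nc T : Fin M → ℕ) [∀ i, NeZero (Nc i)]
    (hT : ∀ i, 1 ≤ T i) (hN : ∀ i, 2 * T i ≤ Nc i)
    (H : Finset ((i : Fin M) × ZMod (Nc i)))
    (hhit : ∀ S : Finset ((i : Fin M) × ZMod (Nc i)),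
      (∃ C₁ C₂ : Finset ((i : Fin M) × ZMod (Nc i)),
        (∃ i j, C₁ = (cycInt (Nc i) (T i) j).image (Sigma.mk i)) ∧
        (∃ i j, C₂ = (cycInt (Nc i) (T i) j).image (Sigma.mk i)) ∧
        Disjoint C₁ C₂ ∧ C₁ ∪ C₂ ⊆ S) → (S ∩ H).Nonempty) :
    (∀ i : Fin M,
      ⌈(Nc i : ℚ) / (T i : ℚ)⌉₊ - 1 ≤ (H.filter (fun x => x.1 = i)).card) ∧
    ((Finset.univ.filter (fun i : Fin M =>
        ∃ j : ZMod (Nc i), ∀ n ∈ cycInt (Nc i) (T i) j,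
          (⟨i, n⟩ : (i : Fin M) × ZMod (Nc i)) ∉ H)).card ≤ 1) ∧
    (∑ i, ⌈(Nc i : ℚ) / (T i : ℚ)⌉₊ - 1 ≤ H.card) :=
  disjoint_groups_hitting_lower_bound_steps_general M Nc T hT hN H hhit
end

section
/- In the disjoint (N_1,...,N_M; T_1,...,T_M)-collusion setting, any hitting set H for the family F_1 ∪ F_2 (Type 1: |S ∩ P_i| ≥ T_i + 1 for some i; Type 2: |S ∩ P_j| ≥ T_j and |S ∩ P_k| ≥ T_k for distinct j,k) must satisfy |H ∩ P_i| ≥ N_i - T_i for every i, and |H ∩ P_i| = N_i - T_i can hold for at most one index i. -/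
/-! A hitting set `H` must meet `P i \ H` unless that set is too small to be of Type 1, which
gives `|P i \ H| ≤ T i`, i.e. `|H ∩ P i| ≥ N i - T i`. If equality held for two indices `j ≠ k`,
then `(P j ∪ P k) \ H` would be a Type 2 set missed by `H`. -/

open Finset

namespace Finset

variable {α : Type*} [DecidableEq α] {H A B : Finset α} {t tA tB : ℕ}

lemma le_card_sdiff_of_card_inter_add_le (h : #(H ∩ A) + t ≤ #A) : t ≤ #(A \ H) := by
  have := card_sdiff_add_card_inter A H
  rw [inter_comm] at this
  omega

lemma not_inter_nonempty_of_disjoint {S : Finset α} (h : Disjoint S H) : ¬(S ∩ H).Nonempty := by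
  rw [disjoint_iff_inter_eq_empty.mp h]
  exact not_nonempty_empty

lemma union_sdiff_inter_left_of_disjoint (hAB : Disjoint A B) : ((A ∪ B) \ H) ∩ A = A \ H := by
  rw [union_sdiff_distrib, union_inter_distrib_right, inter_eq_left.mpr sdiff_subset,
    disjoint_iff_inter_eq_empty.mp hAB.symm.disjoint_sdiff_left, union_empty]

lemma card_sub_le_card_inter_of_hitting
    (hhit : ∀ S : Finset α, t + 1 ≤ #(S ∩ A) → (S ∩ H).Nonempty) : #A - t ≤ #(H ∩ A) := by
  by_contra! hlt
  refine not_inter_nonempty_of_disjoint disjoint_sdiff_self_left (hhit (A \ H) ?_)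
  rw [inter_eq_left.mpr sdiff_subset]
  exact le_card_sdiff_of_card_inter_add_le (by omega)

lemma not_card_inter_add_le_and_of_hitting (hAB : Disjoint A B)
    (hhit : ∀ S : Finset α, tA ≤ #(S ∩ A) → tB ≤ #(S ∩ B) → (S ∩ H).Nonempty) :
    ¬(#(H ∩ A) + tA ≤ #A ∧ #(H ∩ B) + tB ≤ #B) := by
  rintro ⟨hA, hB⟩
  refine not_inter_nonempty_of_disjoint disjoint_sdiff_self_left (hhit ((A ∪ B) \ H) ?_ ?_)
  · rw [union_sdiff_inter_left_of_disjoint hAB]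
    exact le_card_sdiff_of_card_inter_add_le hA
  · rw [union_comm, union_sdiff_inter_left_of_disjoint hAB.symm]
    exact le_card_sdiff_of_card_inter_add_le hB

end Finset

theorem disjoint_collusion_hitting_lower_bound_steps_general (N M : ℕ)
    (P : Fin M → Finset (Fin N)) (Nc T : Fin M → ℕ)
    (hdisj : ∀ i j : Fin M, i ≠ j → Disjoint (P i) (P j))
    (hcard : ∀ i, (P i).card = Nc i)
    (hTN : ∀ i, T i ≤ Nc i)
    (H : Finset (Fin N))
    (hhit : ∀ S : Finset (Fin N),
      ((∃ i, T i + 1 ≤ (S ∩ P i).card) ∨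
       (∃ j k, j ≠ k ∧ T j ≤ (S ∩ P j).card ∧ T k ≤ (S ∩ P k).card)) →
      (S ∩ H).Nonempty) :
    (∀ i : Fin M, Nc i - T i ≤ (H ∩ P i).card) ∧
    (Finset.univ.filter (fun i : Fin M => (H ∩ P i).card = Nc i - T i)).card ≤ 1 := by
  have lower (i : Fin M) : Nc i - T i ≤ #(H ∩ P i) :=
    hcard i ▸ card_sub_le_card_inter_of_hitting fun S hS => hhit S (Or.inl ⟨i, hS⟩)
  have tight {i : Fin M} (hi : i ∈ univ.filter fun i => #(H ∩ P i) = Nc i - T i) :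
      #(H ∩ P i) + T i ≤ #(P i) := by
    have := (mem_filter.mp hi).2
    have := hTN i
    rw [hcard]
    omega
  refine ⟨lower, card_le_one.mpr fun j hj k hk => ?_⟩
  by_contra hjk
  exact not_card_inter_add_le_and_of_hitting (hdisj j k hjk)
    (fun S hSj hSk => hhit S (Or.inr ⟨j, k, hjk, hSj, hSk⟩)) ⟨tight hj, tight hk⟩

/-- In the disjoint `(N_1,...,N_M; T_1,...,T_M)`-collusion setting, any hitting set `H`
for the family of Type 1 sets (`|S ∩ P i| ≥ T i + 1` for some `i`) and Type 2 sets
(`|S ∩ P j| ≥ T j` and `|S ∩ P k| ≥ T k` for distinct `j, k`) satisfies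
`|H ∩ P i| ≥ N i - T i` for every `i`, and equality `|H ∩ P i| = N i - T i` can hold for
at most one index `i`. -/
theorem disjoint_collusion_hitting_lower_bound_steps (N M : ℕ) (hM : 2 ≤ M)
    (P : Fin M → Finset (Fin N)) (Nc T : Fin M → ℕ)
    (hdisj : ∀ i j : Fin M, i ≠ j → Disjoint (P i) (P j))
    (hcover : Finset.univ.biUnion P = (Finset.univ : Finset (Fin N)))
    (hcard : ∀ i, (P i).card = Nc i)
    (hT1 : ∀ i, 1 ≤ T i) (hTN : ∀ i, T i ≤ Nc i)
    (H : Finset (Fin N))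
    (hhit : ∀ S : Finset (Fin N),
      ((∃ i, T i + 1 ≤ (S ∩ P i).card) ∨
       (∃ j k, j ≠ k ∧ T j ≤ (S ∩ P j).card ∧ T k ≤ (S ∩ P k).card)) →
      (S ∩ H).Nonempty) :
    (∀ i : Fin M, Nc i - T i ≤ (H ∩ P i).card) ∧
    (Finset.univ.filter (fun i : Fin M => (H ∩ P i).card = Nc i - T i)).card ≤ 1 :=
  disjoint_collusion_hitting_lower_bound_steps_general N M P Nc T hdisj hcard hTN H hhit
end

section
/- In the disjoint (N_1,...,N_M; T_1,...,T_M)-collusion setting with M ≥ 2, the set H consisting of exactly N_1 - T_1 elements of P_1 and exactly N_j - T_j + 1 elements of P_j for each j ≥ 2 is a hitting set for the family F_1 ∪ F_2 (Type 1 and Type 2 sets), and |H| = Σ_{j=1}^M (N_j - T_j) + (M - 1). -/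
/-!
Within one group `P i`, the sets `S ∩ P i` and `H ∩ P i` must meet as soon as their sizes add up
to more than `|P i|`. `H` leaves only `T i₀` elements of `P i₀` and `T j - 1` elements of every
other `P j` uncovered, so a set with `T i + 1` elements in one group, or with `T` elements in two
groups (one of which is not `P i₀`), meets `H`. The size of `H` is the sum over the partition.
-/

open Finset

theorem Finset.inter_nonempty_of_card_lt_card_inter_add_card_inter {α : Type*} [DecidableEq α]
    {S H B : Finset α} (h : #B < #(S ∩ B) + #(H ∩ B)) : (S ∩ H).Nonempty :=
  (inter_nonempty_of_card_lt_card_add_card inter_subset_right inter_subset_right h).mono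
    (inter_subset_inter inter_subset_left inter_subset_left)

theorem Finset.card_eq_sum_card_inter_of_subset_biUnion {ι α : Type*} [Fintype ι]
    [DecidableEq α] {P : ι → Finset α} (hdisj : ∀ i j, i ≠ j → Disjoint (P i) (P j))
    {H : Finset α} (hH : H ⊆ univ.biUnion P) : #H = ∑ j, #(H ∩ P j) := by
  conv_lhs => rw [← inter_eq_left.mpr hH, inter_biUnion]
  exact card_biUnion fun i _ j _ hij =>
    (hdisj i j hij).mono inter_subset_right inter_subset_right

theorem Fintype.sum_eq_sum_add_card_sub_one {ι : Type*} [Fintype ι] [DecidableEq ι]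
    {f g : ι → ℕ} (i₀ : ι) (h₀ : g i₀ = f i₀) (h : ∀ j, j ≠ i₀ → g j = f j + 1) :
    ∑ j, g j = ∑ j, f j + (Fintype.card ι - 1) := by
  have hrest : ∑ j ∈ {i₀}ᶜ, g j = ∑ j ∈ {i₀}ᶜ, f j + (Fintype.card ι - 1) := by
    rw [Finset.sum_congr rfl fun j hj => h j (by simpa using hj), sum_add_distrib, sum_const,
      card_compl, card_singleton, smul_eq_mul, mul_one]
  rw [Fintype.sum_eq_add_sum_compl i₀ g, Fintype.sum_eq_add_sum_compl i₀ f, h₀, hrest, add_assoc]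

theorem disjoint_collusion_hitting_upper_bound_general (N M : ℕ)
    (P : Fin M → Finset (Fin N)) (Nc T : Fin M → ℕ)
    (hdisj : ∀ i j : Fin M, i ≠ j → Disjoint (P i) (P j))
    (hcover : Finset.univ.biUnion P = (Finset.univ : Finset (Fin N)))
    (hcard : ∀ i, (P i).card = Nc i)
    (hTN : ∀ i, T i ≤ Nc i)
    (i₀ : Fin M) (H : Finset (Fin N))
    (hH0 : (H ∩ P i₀).card = Nc i₀ - T i₀)
    (hHj : ∀ j : Fin M, j ≠ i₀ → (H ∩ P j).card = Nc j - T j + 1) :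
    (∀ S : Finset (Fin N),
      ((∃ i, T i + 1 ≤ (S ∩ P i).card) ∨
       (∃ j k, j ≠ k ∧ T j ≤ (S ∩ P j).card ∧ T k ≤ (S ∩ P k).card)) →
      (S ∩ H).Nonempty) ∧
    H.card = ∑ j, (Nc j - T j) + (M - 1) := by
  have hH_ge : ∀ i, Nc i - T i ≤ #(H ∩ P i) := fun i => by
    by_cases hi : i = i₀
    · exact (hi ▸ hH0).ge
    · exact (hHj i hi).ge.trans' (Nat.le_succ _)
  refine ⟨?_, ?_⟩
  · rintro S (⟨i, hi⟩ | ⟨j, k, hjk, hj, hk⟩)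
    · refine inter_nonempty_of_card_lt_card_inter_add_card_inter (B := P i) ?_
      have := hH_ge i; have := hcard i; have := hTN i
      omega
    · -- `P i₀` is the only group in which `T` elements of `S` may all avoid `H`
      obtain ⟨l, hl, hSl⟩ : ∃ l, l ≠ i₀ ∧ T l ≤ #(S ∩ P l) := by
        by_cases hj₀ : j = i₀
        · exact ⟨k, hj₀ ▸ hjk.symm, hk⟩
        · exact ⟨j, hj₀, hj⟩
      refine inter_nonempty_of_card_lt_card_inter_add_card_inter (B := P l) ?_
      have := hHj l hl; have := hcard l; have := hTN l
      omega
  · rw [card_eq_sum_card_inter_of_subset_biUnion hdisj (hcover ▸ subset_univ H),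
      Fintype.sum_eq_sum_add_card_sub_one i₀ hH0 hHj, Fintype.card_fin]

/-- In the disjoint `(N_1,...,N_M; T_1,...,T_M)`-collusion setting with `M ≥ 2`, a set
`H` containing exactly `N i₀ - T i₀` elements of the distinguished group `P i₀` and
exactly `N j - T j + 1` elements of `P j` for every other `j` is a hitting set for the
family of Type 1 and Type 2 sets, and `|H| = Σ_j (N j - T j) + (M - 1)`. -/
theorem disjoint_collusion_hitting_upper_bound (N M : ℕ) (hM : 2 ≤ M)
    (P : Fin M → Finset (Fin N)) (Nc T : Fin M → ℕ)
    (hdisj : ∀ i j : Fin M, i ≠ j → Disjoint (P i) (P j))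
    (hcover : Finset.univ.biUnion P = (Finset.univ : Finset (Fin N)))
    (hcard : ∀ i, (P i).card = Nc i)
    (hT1 : ∀ i, 1 ≤ T i) (hTN : ∀ i, T i ≤ Nc i)
    (i₀ : Fin M) (H : Finset (Fin N))
    (hH0 : (H ∩ P i₀).card = Nc i₀ - T i₀)
    (hHj : ∀ j : Fin M, j ≠ i₀ → (H ∩ P j).card = Nc j - T j + 1) :
    (∀ S : Finset (Fin N),
      ((∃ i, T i + 1 ≤ (S ∩ P i).card) ∨
       (∃ j k, j ≠ k ∧ T j ≤ (S ∩ P j).card ∧ T k ≤ (S ∩ P k).card)) →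
      (S ∩ H).Nonempty) ∧
    H.card = ∑ j, (Nc j - T j) + (M - 1) :=
  disjoint_collusion_hitting_upper_bound_general N M P Nc T hdisj hcover hcard hTN i₀ H hH0 hHj
end
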